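/- arXiv:0803.4473 — 9 statements merged into one kernel-verified Lean document; each statement's English description precedes it below -/
import Mathlib

section
/- Let X be a paracompact topological space, Y a Banach space, and φ : X → Set Y a lower semicontinuous set-valued map such that each φ(x) is nonempty, closed, and convex. Then φ admits a continuous single-valued selection, i.e., there exists a continuous f : X → Y with f(x) ∈ φ(x) for all x. -/
/-!
Lower hemicontinuity together with a partition of unity gives, for every `ε > 0`, a continuous map
`g` with `g x` in the `ε`-thickening of `φ x` (the thickening of a convex set is convex). Applying
this to the map `x ↦ φ x ∩ ball (g x) ε`, which is again lower hemicontinuous with nonempty convex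
values, improves `g` to a `δ`-approximate selection within `ε + δ` of `g`. With `ε = 2⁻ⁿ` the
resulting sequence converges uniformly by completeness, and its limit is continuous and takes values
in the closures of the `φ x`, i.e. in `φ x`.
-/

open Set Filter Topology Metric

theorem exists_tendstoUniformly_of_dist_le_of_summable {α β : Type*} [PseudoMetricSpace β]
    [CompleteSpace β] {f : ℕ → α → β} {d : ℕ → ℝ} (hd : Summable d)
    (hf : ∀ n x, dist (f n x) (f (n + 1) x) ≤ d n) :
    ∃ F : α → β, TendstoUniformly f F atTop := by
  choose F hF using fun x ↦
    cauchySeq_tendsto_of_complete (cauchySeq_of_dist_le_of_summable d (hf · x) hd)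
  refine ⟨F, Metric.tendstoUniformly_iff.2 fun ε hε ↦ ?_⟩
  filter_upwards [(tendsto_sum_nat_add d).eventually (gt_mem_nhds hε)] with n hn x
  rw [dist_comm]
  refine (dist_le_tsum_of_dist_le_of_tendsto d (hf · x) hd (hF x) n).trans_lt ?_
  simpa only [add_comm n] using hn

theorem mem_closure_of_tendsto_of_mem_thickening {ι α : Type*} [PseudoMetricSpace α]
    {l : Filter ι} [l.NeBot] {u : ι → α} {ε : ι → ℝ} {a : α} {s : Set α}
    (hu : Tendsto u l (𝓝 a)) (hε : Tendsto ε l (𝓝 0)) (hus : ∀ᶠ i in l, u i ∈ thickening (ε i) s) :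
    a ∈ closure s := by
  refine Metric.mem_closure_iff.2 fun δ hδ ↦ ?_
  obtain ⟨i, hui, hεi, hi⟩ := ((Metric.tendsto_nhds.1 hu (δ / 2) (half_pos hδ)).and
    ((hε.eventually (gt_mem_nhds (half_pos hδ))).and hus)).exists
  obtain ⟨z, hz, huz⟩ := mem_thickening_iff.1 hi
  refine ⟨z, hz, ?_⟩
  calc dist a z ≤ dist a (u i) + dist (u i) z := dist_triangle _ _ _
    _ < δ / 2 + δ / 2 := add_lt_add (by rwa [dist_comm]) (huz.trans hεi)
    _ = δ := add_halves δ

namespace LowerHemicontinuous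

variable {X Y : Type*} [TopologicalSpace X] [NormalSpace X] [ParacompactSpace X]
  [NormedAddCommGroup Y] [NormedSpace ℝ Y] {φ : X → Set Y}

theorem exists_continuous_forall_mem_thickening (hφ : LowerHemicontinuous φ)
    (hne : ∀ x, (φ x).Nonempty) (hcv : ∀ x, Convex ℝ (φ x)) {ε : ℝ} (hε : 0 < ε) :
    ∃ g : C(X, Y), ∀ x, g x ∈ thickening ε (φ x) := by
  refine exists_continuous_forall_mem_convex_of_local_const (fun x ↦ (hcv x).thickening ε)
    fun x ↦ ?_
  obtain ⟨z, hz⟩ := hne x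
  have hopen := lowerHemicontinuous_iff_isOpen_inter_nonempty.1 hφ (ball z ε) isOpen_ball
  refine ⟨z, ?_⟩
  filter_upwards [hopen.mem_nhds ⟨z, hz, mem_ball_self hε⟩] with y ⟨w, hwφ, hwz⟩
  exact mem_thickening_iff.2 ⟨w, hwφ, mem_ball'.1 hwz⟩

theorem exists_continuous_forall_mem_thickening_and_dist_lt (hφ : LowerHemicontinuous φ)
    (hcv : ∀ x, Convex ℝ (φ x)) {g : X → Y} (hg : Continuous g) {ε δ : ℝ}
    (hgφ : ∀ x, g x ∈ thickening ε (φ x)) (hδ : 0 < δ) :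
    ∃ g' : C(X, Y), (∀ x, g' x ∈ thickening δ (φ x)) ∧ ∀ x, dist (g x) (g' x) < δ + ε := by
  have hψ : LowerHemicontinuous fun x ↦ φ x ∩ ball (g x) ε :=
    hφ.inter_hasOpenCGraph (g := fun x ↦ ball (g x) ε) <|
      isOpen_lt (continuous_snd.dist (hg.comp continuous_fst)) continuous_const
  have hψne (x : X) : (φ x ∩ ball (g x) ε).Nonempty := by
    obtain ⟨z, hz, hgz⟩ := mem_thickening_iff.1 (hgφ x)
    exact ⟨z, hz, mem_ball'.2 hgz⟩
  obtain ⟨g', hg'⟩ := hψ.exists_continuous_forall_mem_thickening hψne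
    (fun x ↦ (hcv x).inter (convex_ball _ _)) hδ
  refine ⟨g', fun x ↦ thickening_subset_of_subset δ inter_subset_left (hg' x), fun x ↦ ?_⟩
  exact mem_ball'.1 <|
    Metric.thickening_ball _ _ _ (thickening_subset_of_subset δ inter_subset_right (hg' x))

theorem exists_seq_continuous_forall_mem_thickening (hφ : LowerHemicontinuous φ)
    (hne : ∀ x, (φ x).Nonempty) (hcv : ∀ x, Convex ℝ (φ x)) :
    ∃ f : ℕ → C(X, Y), (∀ n x, f n x ∈ thickening ((1 / 2) ^ n) (φ x)) ∧
      ∀ n x, dist (f n x) (f (n + 1) x) < (1 / 2) ^ (n + 1) + (1 / 2) ^ n := by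
  let S (n : ℕ) := {g : C(X, Y) // ∀ x, g x ∈ thickening ((1 / 2) ^ n) (φ x)}
  have hstep (n : ℕ) (g : S n) :
      ∃ g' : S (n + 1), ∀ x, dist (g.1 x) (g'.1 x) < (1 / 2) ^ (n + 1) + (1 / 2) ^ n :=
    let ⟨g', hg'φ, hg'g⟩ :=
      hφ.exists_continuous_forall_mem_thickening_and_dist_lt hcv g.1.continuous g.2 (by positivity)
    ⟨⟨g', hg'φ⟩, hg'g⟩
  choose next hnext using hstep
  obtain ⟨g₀, hg₀⟩ := hφ.exists_continuous_forall_mem_thickening hne hcv one_pos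
  let f (n : ℕ) : S n := Nat.rec ⟨g₀, by simpa only [pow_zero] using hg₀⟩ next n
  exact ⟨fun n ↦ (f n).1, fun n ↦ (f n).2, fun n ↦ hnext n (f n)⟩

end LowerHemicontinuous

/-- Michael's convex-valued selection theorem: an LSC map from a paracompact
space to a Banach space with nonempty closed convex values admits a continuous
selection. -/
theorem michael_convex_valued_selection
    {X : Type*} [TopologicalSpace X] [ParacompactSpace X] [T2Space X]
    {Y : Type*} [NormedAddCommGroup Y] [NormedSpace ℝ Y] [CompleteSpace Y]
    (φ : X → Set Y)
    (hlsc : ∀ U : Set Y, IsOpen U → IsOpen {x | (φ x ∩ U).Nonempty})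
    (hne : ∀ x, (φ x).Nonempty)
    (hcl : ∀ x, IsClosed (φ x))
    (hcv : ∀ x, Convex ℝ (φ x)) :
    ∃ f : X → Y, Continuous f ∧ ∀ x, f x ∈ φ x := by
  obtain ⟨f, hfφ, hfdist⟩ := (lowerHemicontinuous_iff_isOpen_inter_nonempty.2 hlsc)
    |>.exists_seq_continuous_forall_mem_thickening hne hcv
  have hsum : Summable fun n : ℕ ↦ (1 / 2 : ℝ) ^ (n + 1) + (1 / 2) ^ n :=
    ((summable_nat_add_iff 1).2 summable_geometric_two).add summable_geometric_two
  obtain ⟨F, hF⟩ := exists_tendstoUniformly_of_dist_le_of_summable (f := fun n ↦ f n) hsum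
    fun n x ↦ (hfdist n x).le
  refine ⟨F, hF.continuous (.of_forall fun n ↦ (f n).continuous), fun x ↦ ?_⟩
  exact (hcl x).closure_subset <| mem_closure_of_tendsto_of_mem_thickening (hF.tendsto_at x)
    (tendsto_pow_atTop_nhds_zero_of_lt_one (by norm_num) (by norm_num)) (.of_forall (hfφ · x))
end

section
/- Let X be a T₁ topological space such that for every Banach space Y, every lower semicontinuous map φ : X → Set Y with nonempty closed convex values admits a continuous selection. Then X is paracompact. -/
open Set Filter Topology
open scoped lp

/-!
Given an open cover `U` of `X` indexed by `α`, the carrier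
`x ↦ {g ∈ ℓ¹(α) | ∑ g = 1, g i = 0 unless x ∈ U i}` has closed affine values, and it is lower
semicontinuous because the finitely supported elements of each value are dense in it, while a
finitely supported one stays in the carrier on a finite intersection of the `U i`.
A continuous selection `f` maps `X` into the closed hyperplane `∑ g = 1`, which the open sets
`{g | g i ≠ 0}` cover. The metric space `ℓ¹(α)` is paracompact, so this cover has a locally finite
refinement with the same indices, and its preimage under `f` refines `U`.
-/

variable {α : Type*}

lemma exists_apply_ne_zero_of_tsum_ne_zero {M : Type*} [AddCommMonoid M] [TopologicalSpace M]
    {g : α → M} (hg : ∑' i, g i ≠ 0) : ∃ i, g i ≠ 0 := by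
  by_contra! h
  simp [h] at hg

lemma lp.tsum_single {E : Type*} [NormedAddCommGroup E] [DecidableEq α] (p : ENNReal) (i : α)
    (r : E) : ∑' j, lp.single p i r j = r := by
  simp only [lp.single_apply]
  exact tsum_pi_single i r

def unitSumSupportedIn (I : Set α) : Set ℓ¹(α, ℝ) :=
  {g | ∑' i, g i = 1 ∧ ∀ i ∉ I, g i = 0}

lemma unitSumSupportedIn_mono {I J : Set α} (h : I ⊆ J) :
    unitSumSupportedIn I ⊆ unitSumSupportedIn J :=
  fun _ ⟨hsum, hsupp⟩ => ⟨hsum, fun i hi => hsupp i (fun hiI => hi (h hiI))⟩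

lemma isClosed_unitSumSupportedIn (I : Set α) : IsClosed (unitSumSupportedIn I) := by
  have hsum : IsClosed {g : ℓ¹(α, ℝ) | ∑' i, g i = 1} :=
    isClosed_eq (lp.tsumCLM ℝ α ℝ).continuous continuous_const
  have hsupp : IsClosed {g : ℓ¹(α, ℝ) | ∀ i ∉ I, g i = 0} := by
    simp only [ofPred_forall]
    exact isClosed_iInter fun i => isClosed_iInter fun _ =>
      isClosed_eq (lp.evalCLM ℝ (fun _ : α => ℝ) 1 i).continuous continuous_const
  exact hsum.inter hsupp

lemma convex_unitSumSupportedIn (I : Set α) : Convex ℝ (unitSumSupportedIn I) := by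
  rintro f ⟨hf, hfI⟩ g ⟨hg, hgI⟩ a b - - hab
  refine ⟨?_, fun i hi => ?_⟩
  · have := map_add (lp.tsumCLM ℝ α ℝ) (a • f) (b • g)
    simp only [map_smul, lp.tsumCLM_apply, hf, hg, smul_eq_mul, mul_one] at this
    rw [this, hab]
  · simp only [lp.coeFn_add, lp.coeFn_smul, Pi.add_apply, Pi.smul_apply, hfI i hi, hgI i hi,
      smul_zero, add_zero]

lemma unitSumSupportedIn_nonempty {I : Set α} (hI : I.Nonempty) :
    (unitSumSupportedIn I).Nonempty := by
  classical
  obtain ⟨a, ha⟩ := hI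
  refine ⟨lp.single 1 a 1, lp.tsum_single 1 a (1 : ℝ), fun i hi => ?_⟩
  exact lp.single_apply_ne 1 a 1 fun hia => hi (hia ▸ ha)

lemma exists_finite_subset_unitSumSupportedIn_inter_nonempty {I : Set α} {g : ℓ¹(α, ℝ)}
    (hg : g ∈ unitSumSupportedIn I) {V : Set ℓ¹(α, ℝ)} (hV : V ∈ 𝓝 g) :
    ∃ J ⊆ I, J.Finite ∧ (unitSumSupportedIn J ∩ V).Nonempty := by
  classical
  obtain ⟨hsum, hsupp⟩ := hg
  obtain ⟨a, ha⟩ := exists_apply_ne_zero_of_tsum_ne_zero (hsum.symm ▸ one_ne_zero)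
  have haI : a ∈ I := by_contra fun haI => ha (hsupp a haI)
  -- truncate `g` to `t` and put the missing mass on the coordinate `a`
  set h : Finset α → ℓ¹(α, ℝ) := fun t =>
    ∑ i ∈ t, lp.single 1 i (g i) + (1 - ∑ i ∈ t, g i) • lp.single 1 a 1 with h_def
  have h_tendsto : Tendsto h atTop (𝓝 g) := by
    have hg_sum : HasSum (fun i => g i) 1 := hsum ▸ g.2.summable_of_one.hasSum
    have := Tendsto.add (lp.hasSum_single ENNReal.one_ne_top g)
      (((tendsto_const_nhds (x := (1 : ℝ))).sub hg_sum).smul_const (lp.single 1 a (1 : ℝ)))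
    rwa [sub_self, zero_smul, add_zero] at this
  obtain ⟨t, ht⟩ := (h_tendsto.eventually_mem hV).exists
  refine ⟨insert a (I ∩ t), insert_subset haI inter_subset_left,
    (t.finite_toSet.inter_of_right I).insert a, h t, ⟨?_, fun j hj => ?_⟩, ht⟩
  · rw [← lp.tsumCLM_apply ℝ]
    simp only [h_def, map_add, map_sum, map_smul, lp.tsumCLM_apply, lp.tsum_single, smul_eq_mul,
      mul_one, add_sub_cancel]
  · obtain ⟨hja, hjIt⟩ : j ≠ a ∧ (j ∈ I → j ∉ t) := by
      simpa using hj
    simp only [h_def, lp.coeFn_add, lp.coeFn_sum, lp.coeFn_smul, lp.coeFn_single, Pi.add_apply,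
      Finset.sum_apply, Pi.single_apply, Finset.sum_ite_eq, Pi.smul_apply, hja, if_false,
      smul_zero, add_zero]
    split_ifs with hjt
    exacts [hsupp j fun hjI => hjIt hjI hjt, rfl]

variable {X : Type*} [TopologicalSpace X] {U : α → Set X}

lemma isOpen_setOf_unitSumSupportedIn_inter_nonempty (hU : ∀ i, IsOpen (U i))
    {V : Set ℓ¹(α, ℝ)} (hV : IsOpen V) :
    IsOpen {x | (unitSumSupportedIn {i | x ∈ U i} ∩ V).Nonempty} := by
  refine isOpen_iff_mem_nhds.2 fun x ⟨g, hg, hgV⟩ => ?_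
  obtain ⟨J, hJx, hJ, h, hJ_h, hV_h⟩ :=
    exists_finite_subset_unitSumSupportedIn_inter_nonempty hg (hV.mem_nhds hgV)
  filter_upwards [(hJ.isOpen_biInter fun i _ => hU i).mem_nhds (mem_iInter₂.2 hJx)] with y hy
  exact ⟨h, unitSumSupportedIn_mono (fun i hi => mem_iInter₂.1 hy i hi) hJ_h, hV_h⟩

lemma exists_locallyFinite_subset_of_continuous_unitSumSupportedIn {f : X → ℓ¹(α, ℝ)}
    (hf : Continuous f) (hfU : ∀ x, f x ∈ unitSumSupportedIn {i | x ∈ U i}) :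
    ∃ W : α → Set X, (∀ i, IsOpen (W i)) ∧ ⋃ i, W i = univ ∧ LocallyFinite W ∧
      ∀ i, W i ⊆ U i := by
  obtain ⟨v, hv_open, hv_cover, hv_lf, hv_ne⟩ := precise_refinement_set
    (isClosed_eq (lp.tsumCLM ℝ α ℝ).continuous continuous_const)
    (fun i => {g : ℓ¹(α, ℝ) | g i ≠ 0})
    (fun i => isOpen_ne_fun (lp.evalCLM ℝ (fun _ : α => ℝ) 1 i).continuous continuous_const)
    (fun g (hg : ∑' i, g i = 1) => mem_iUnion.2 <|
      exists_apply_ne_zero_of_tsum_ne_zero (hg.symm ▸ one_ne_zero))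
  refine ⟨fun i => f ⁻¹' v i, fun i => (hv_open i).preimage hf, ?_, hv_lf.preimage_continuous hf,
    fun i x hx => by_contra fun hxi => hv_ne i hx ((hfU x).2 i hxi)⟩
  rw [← preimage_iUnion]
  exact eq_univ_of_forall fun x => hv_cover (hfU x).1

theorem paracompact_of_selection_property_general
    {X : Type} [TopologicalSpace X]
    (hsel : ∀ (Y : Type) [NormedAddCommGroup Y] [NormedSpace ℝ Y] [CompleteSpace Y]
      (φ : X → Set Y),
      (∀ U : Set Y, IsOpen U → IsOpen {x | (φ x ∩ U).Nonempty}) →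
      (∀ x, (φ x).Nonempty) → (∀ x, IsClosed (φ x)) → (∀ x, Convex ℝ (φ x)) →
      ∃ f : X → Y, Continuous f ∧ ∀ x, f x ∈ φ x) :
    ParacompactSpace X := by
  refine ⟨fun α U hU hU_cover => ?_⟩
  have hx_mem : ∀ x, {i | x ∈ U i}.Nonempty := fun x => mem_iUnion.1 (hU_cover ▸ mem_univ x)
  obtain ⟨f, hf, hfU⟩ := hsel ℓ¹(α, ℝ) (fun x => unitSumSupportedIn {i | x ∈ U i})
    (fun _ => isOpen_setOf_unitSumSupportedIn_inter_nonempty hU)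
    (fun x => unitSumSupportedIn_nonempty (hx_mem x))
    (fun _ => isClosed_unitSumSupportedIn _) (fun _ => convex_unitSumSupportedIn _)
  obtain ⟨W, hW_open, hW_cover, hW_lf, hWU⟩ :=
    exists_locallyFinite_subset_of_continuous_unitSumSupportedIn hf hfU
  exact ⟨α, W, hW_open, hW_cover, hW_lf, fun i => ⟨i, hWU i⟩⟩

/-- Converse of Michael's theorem: the selection property for all
Banach-space-valued LSC convex-valued maps implies paracompactness. -/
theorem paracompact_of_selection_property
    {X : Type} [TopologicalSpace X] [T1Space X]
    (hsel : ∀ (Y : Type) [NormedAddCommGroup Y] [NormedSpace ℝ Y] [CompleteSpace Y]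
      (φ : X → Set Y),
      (∀ U : Set Y, IsOpen U → IsOpen {x | (φ x ∩ U).Nonempty}) →
      (∀ x, (φ x).Nonempty) → (∀ x, IsClosed (φ x)) → (∀ x, Convex ℝ (φ x)) →
      ∃ f : X → Y, Continuous f ∧ ∀ x, f x ∈ φ x) :
    ParacompactSpace X :=
  paracompact_of_selection_property_general hsel
end

section
/- Let X be a normal topological space and φ : X → Set ℝ a lower semicontinuous set-valued map such that each φ(x) is either a nonempty compact convex subset of ℝ or all of ℝ. Then φ admits a continuous single-valued selection. -/
/-!
Compress `ℝ` onto `(-1, 1)` by an order isomorphism `e`. The infimum `g` and the supremum `h`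
of `e '' φ x` are upper and lower semicontinuous; they lie in `(-1, 1)` where `φ x` is compact
and equal `-1` and `1` where `φ x = ℝ`. The Katětov–Tong insertion theorem gives a continuous `f`
with `g ≤ f ≤ h`: averaging Urysohn functions for the levels of a grid of mesh `δ` gives a
continuous function within `δ` of the band `[g, h]`, and successive refinements with `δ = 2⁻ⁿ`
converge uniformly. Then `(1 - ρ) f` lies in `(-1, 1)`, for an Urysohn function `ρ` that is `1`
where `|f| = 1` and vanishes outside `{g < 0 < h}`, and pulling it back by `e` gives the selection.
-/

open Set Filter Topology

theorem min_sub_le_add_mul_sum {u : ℕ → ℝ} {a δ t : ℝ} (hu0 : ∀ k, 0 ≤ u k)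
    (hu1 : ∀ k : ℕ, a + (k + 1) * δ ≤ t → u k = 1) (hδ : 0 ≤ δ) (N : ℕ) :
    min (t - δ) (a + N * δ) ≤ a + δ * ∑ k ∈ Finset.range N, u k := by
  induction N with
  | zero => simp
  | succ N ih =>
    rw [Finset.sum_range_succ, mul_add]
    push_cast
    by_cases hN : a + (N + 1) * δ ≤ t
    · rw [min_eq_right (by linarith)] at ih
      rw [hu1 N hN]
      linarith [min_le_right (t - δ) (a + (N + 1) * δ)]
    · rw [min_eq_left (by linarith)] at ih
      linarith [min_le_left (t - δ) (a + (N + 1) * δ), mul_nonneg hδ (hu0 N)]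

theorem add_mul_sum_le_min {u : ℕ → ℝ} {a δ s : ℝ} (hu1 : ∀ k, u k ≤ 1)
    (hu0 : ∀ k : ℕ, s ≤ a + k * δ → u k = 0) (hδ : 0 ≤ δ) (has : a ≤ s) (N : ℕ) :
    a + δ * ∑ k ∈ Finset.range N, u k ≤ min (a + N * δ) (s + δ) := by
  induction N with
  | zero => simpa using has.trans (le_add_of_nonneg_right hδ)
  | succ N ih =>
    rw [Finset.sum_range_succ, mul_add]
    push_cast
    by_cases hN : s ≤ a + N * δ
    · rw [hu0 N hN, mul_zero, add_zero]
      exact ih.trans (min_le_min_right _ (by linarith))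
    · have := mul_le_mul_of_nonneg_left (hu1 N) hδ
      have := le_min_iff.1 ih
      exact le_min (by linarith) (by linarith)

theorem exists_continuous_tendsto_of_abs_sub_le_geometric {X : Type*} [TopologicalSpace X]
    {F : ℕ → X → ℝ} (hF : ∀ n, Continuous (F n)) {C r : ℝ} (hr0 : 0 ≤ r) (hr1 : r < 1)
    (hFF : ∀ n x, |F (n + 1) x - F n x| ≤ C * r ^ n) :
    ∃ f : X → ℝ, Continuous f ∧ ∀ x, Tendsto (fun n => F n x) atTop (𝓝 (f x)) := by
  have hsum : Summable fun n => C * r ^ n := (summable_geometric_of_lt_one hr0 hr1).mul_left C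
  refine ⟨fun x => F 0 x + ∑' n, (F (n + 1) x - F n x),
    (hF 0).add (continuous_tsum (fun n => (hF (n + 1)).sub (hF n)) hsum hFF), fun x => ?_⟩
  have := ((hsum.of_norm_bounded (fun n => hFF n x)).hasSum.tendsto_sum_nat).const_add (F 0 x)
  simpa only [Finset.sum_range_sub (fun n => F n x), add_sub_cancel] using this

section Insertion

variable {X : Type*} [TopologicalSpace X] [NormalSpace X] {g h : X → ℝ} {a b : ℝ}

theorem exists_continuous_approx_between (hg : UpperSemicontinuous g) (hh : LowerSemicontinuous h)
    (hgh : g ≤ h) (ha : ∀ x, a ≤ g x) (hb : ∀ x, h x ≤ b) {δ : ℝ} (hδ : 0 < δ) :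
    ∃ f : X → ℝ, Continuous f ∧ ∀ x, g x - δ ≤ f x ∧ f x ≤ h x + δ := by
  obtain ⟨N, hN⟩ := exists_nat_ge ((b - a) / δ)
  rw [div_le_iff₀ hδ] at hN
  have hdisj (k : ℕ) : Disjoint (h ⁻¹' Iic (a + k * δ)) (g ⁻¹' Ici (a + (k + 1) * δ)) :=
    disjoint_left.2 fun x (hhx : h x ≤ _) (hgx : _ ≤ g x) => by linarith [hgh x]
  choose u hu0 hu1 hu01 using fun k : ℕ =>
    exists_continuous_zero_one_of_isClosed (hh.isClosed_preimage _) (hg.isClosed_preimage _)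
      (hdisj k)
  refine ⟨fun x => a + δ * ∑ k ∈ Finset.range N, u k x, by fun_prop, fun x => ⟨?_, ?_⟩⟩
  · have := min_sub_le_add_mul_sum (fun k => (hu01 k x).1) (fun k hk => hu1 k hk) hδ.le N
    rwa [min_eq_left (by linarith [hgh x, hb x])] at this
  · exact (add_mul_sum_le_min (fun k => (hu01 k x).2) (fun k hk => hu0 k hk) hδ.le
      ((ha x).trans (hgh x)) N).trans (min_le_right _ _)

theorem exists_continuous_approx_between_near (hg : UpperSemicontinuous g)
    (hh : LowerSemicontinuous h) (hgh : g ≤ h) (ha : ∀ x, a ≤ g x) (hb : ∀ x, h x ≤ b)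
    {f : X → ℝ} (hf : Continuous f) {ε δ : ℝ} (hε : 0 ≤ ε) (hδ : 0 < δ)
    (hgf : ∀ x, g x - ε ≤ f x ∧ f x ≤ h x + ε) :
    ∃ f' : X → ℝ, Continuous f' ∧ (∀ x, g x - δ ≤ f' x ∧ f' x ≤ h x + δ) ∧
      ∀ x, |f' x - f x| ≤ ε + δ := by
  have hle : (fun x => g x ⊔ (f x - ε)) ≤ fun x => h x ⊓ (f x + ε) := fun x => by
    obtain ⟨hgfx, hfhx⟩ := hgf x
    exact sup_le (le_inf (hgh x) (by linarith)) (le_inf (by linarith) (by linarith))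
  obtain ⟨f', hf'c, hf'⟩ := exists_continuous_approx_between (g := fun x => g x ⊔ (f x - ε))
    (h := fun x => h x ⊓ (f x + ε))
    (hg.sup (hf.sub continuous_const).upperSemicontinuous)
    (hh.inf (hf.add continuous_const).lowerSemicontinuous) hle
    (fun x => (ha x).trans le_sup_left) (fun x => inf_le_left.trans (hb x)) hδ
  refine ⟨f', hf'c, fun x => ?_, fun x => abs_sub_le_iff.2 ?_⟩
  · obtain ⟨hlo, hhi⟩ := hf' x
    constructor
    · linarith [le_sup_left (a := g x) (b := f x - ε)]
    · linarith [inf_le_left (a := h x) (b := f x + ε)]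
  · obtain ⟨hlo, hhi⟩ := hf' x
    constructor
    · linarith [inf_le_right (a := h x) (b := f x + ε)]
    · linarith [le_sup_right (a := g x) (b := f x - ε)]

/-- Katětov–Tong insertion theorem. -/
theorem exists_continuous_between_of_semicontinuous (hg : UpperSemicontinuous g)
    (hh : LowerSemicontinuous h) (hgh : g ≤ h) (ha : ∀ x, a ≤ g x) (hb : ∀ x, h x ≤ b) :
    ∃ f : X → ℝ, Continuous f ∧ g ≤ f ∧ f ≤ h := by
  let Approx (n : ℕ) (f : X → ℝ) : Prop :=
    Continuous f ∧ ∀ x, g x - (1 / 2) ^ n ≤ f x ∧ f x ≤ h x + (1 / 2) ^ n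
  obtain ⟨f₀, hf₀⟩ : ∃ f, Approx 0 f := by
    simpa [Approx] using exists_continuous_approx_between hg hh hgh ha hb one_pos
  have hnext (n : ℕ) (f : {f // Approx n f}) :
      ∃ f' : {f // Approx (n + 1) f}, ∀ x, |f'.1 x - f.1 x| ≤ 2 * (1 / 2) ^ n := by
    obtain ⟨f', hf'c, hf', hff'⟩ := exists_continuous_approx_between_near hg hh hgh ha hb f.2.1
      (by positivity) (by positivity) f.2.2 (δ := (1 / 2) ^ (n + 1))
    exact ⟨⟨f', hf'c, hf'⟩, fun x => (hff' x).trans (by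
      rw [pow_succ]; linarith [pow_nonneg (by norm_num : (0 : ℝ) ≤ 1 / 2) n])⟩
  choose next hnext using hnext
  let F (n : ℕ) : {f // Approx n f} := Nat.rec ⟨f₀, hf₀⟩ next n
  obtain ⟨f, hfc, hFf⟩ := exists_continuous_tendsto_of_abs_sub_le_geometric (fun n => (F n).2.1)
    (by norm_num) (by norm_num : (1 / 2 : ℝ) < 1) fun n => hnext n (F n)
  have hpow : Tendsto (fun n : ℕ => (1 / 2 : ℝ) ^ n) atTop (𝓝 0) :=
    tendsto_pow_atTop_nhds_zero_of_lt_one (by norm_num) (by norm_num)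
  refine ⟨f, hfc, fun x => ?_, fun x => ?_⟩
  · exact le_of_tendsto_of_tendsto' (by simpa using hpow.const_sub (g x)) (hFf x)
      fun n => ((F n).2.2 x).1
  · exact le_of_tendsto_of_tendsto' (hFf x) (by simpa using hpow.const_add (h x))
      fun n => ((F n).2.2 x).2

theorem exists_continuous_between_mem_Ioo (hg : UpperSemicontinuous g)
    (hh : LowerSemicontinuous h) (hgh : g ≤ h) (hg1 : ∀ x, -1 ≤ g x) (hh1 : ∀ x, h x ≤ 1)
    (hends : ∀ x, (-1 < g x ∧ h x < 1) ∨ (g x < 0 ∧ 0 < h x)) :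
    ∃ f : X → ℝ, Continuous f ∧ g ≤ f ∧ f ≤ h ∧ ∀ x, f x ∈ Ioo (-1) 1 := by
  obtain ⟨f, hfc, hgf, hfh⟩ := exists_continuous_between_of_semicontinuous hg hh hgh hg1 hh1
  set O := g ⁻¹' Iio 0 ∩ h ⁻¹' Ioi 0
  have hPO : f ⁻¹' (Ioo (-1) 1)ᶜ ⊆ O := fun x hx => by
    refine (hends x).resolve_left fun hx' => hx ⟨?_, ?_⟩ <;> linarith [hgf x, hfh x]
  obtain ⟨ρ, hρ0, hρ1, hρ01⟩ := exists_continuous_zero_one_of_isClosed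
    ((hg.isOpen_preimage 0).inter (hh.isOpen_preimage 0)).isClosed_compl
    (isOpen_Ioo.isClosed_compl.preimage hfc) (disjoint_compl_left.mono_right hPO)
  have hρgh (x : X) : ρ x * g x ≤ 0 ∧ 0 ≤ ρ x * h x := by
    by_cases hx : x ∈ O
    · exact ⟨mul_nonpos_of_nonneg_of_nonpos (hρ01 x).1 hx.1.le, mul_nonneg (hρ01 x).1 hx.2.le⟩
    · simp [hρ0 hx]
  -- `ρ` vanishes off `O`, where `g < 0 < h`, so moving `f` towards `0` keeps it in `[g, h]`.
  refine ⟨fun x => (1 - ρ x) * f x, by fun_prop, fun x => ?_, fun x => ?_, fun x => ?_⟩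
  · nlinarith [mul_nonneg (sub_nonneg.2 (hρ01 x).2) (sub_nonneg.2 (hgf x)), hρgh x]
  · nlinarith [mul_nonneg (sub_nonneg.2 (hρ01 x).2) (sub_nonneg.2 (hfh x)), hρgh x]
  · by_cases hx : f x ∈ Ioo (-1) 1
    · rw [mem_Ioo, ← abs_lt] at hx ⊢
      rw [abs_mul, abs_of_nonneg (sub_nonneg.2 (hρ01 x).2)]
      nlinarith [abs_nonneg (f x), (hρ01 x).1]
    · simp [hρ1 hx]

end Insertion

namespace LowerHemicontinuous

variable {X Y : Type*} [TopologicalSpace X] [TopologicalSpace Y]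

theorem image {Z : Type*} [TopologicalSpace Z] {φ : X → Set Y} (hφ : LowerHemicontinuous φ)
    {κ : Y → Z} (hκ : Continuous κ) : LowerHemicontinuous fun x => κ '' φ x :=
  lowerHemicontinuous_iff_isOpen_inter_nonempty.2 fun U hU => by
    simpa only [image_inter_nonempty_iff] using
      lowerHemicontinuous_iff_isOpen_inter_nonempty.1 hφ _ (hU.preimage hκ)

theorem upperSemicontinuous_sInf {ψ : X → Set ℝ} (hψ : LowerHemicontinuous ψ)
    (hne : ∀ x, (ψ x).Nonempty) (hbdd : ∀ x, BddBelow (ψ x)) :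
    UpperSemicontinuous fun x => sInf (ψ x) :=
  upperSemicontinuous_iff_isOpen_preimage.2 fun t => by
    simpa only [preimage, mem_Iio, csInf_lt_iff (hbdd _) (hne _), Set.Nonempty, mem_inter_iff]
      using lowerHemicontinuous_iff_isOpen_inter_nonempty.1 hψ _ isOpen_Iio

theorem lowerSemicontinuous_sSup {ψ : X → Set ℝ} (hψ : LowerHemicontinuous ψ)
    (hne : ∀ x, (ψ x).Nonempty) (hbdd : ∀ x, BddAbove (ψ x)) :
    LowerSemicontinuous fun x => sSup (ψ x) :=
  lowerSemicontinuous_iff_isOpen_preimage.2 fun t => by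
    simpa only [preimage, mem_Ioi, lt_csSup_iff (hbdd _) (hne _), Set.Nonempty, mem_inter_iff]
      using lowerHemicontinuous_iff_isOpen_inter_nonempty.1 hψ _ isOpen_Ioi

end LowerHemicontinuous

theorem exists_continuous_selection_of_subset_Ioo {X : Type*} [TopologicalSpace X]
    [NormalSpace X] {ψ : X → Set ℝ} (hψ : LowerHemicontinuous ψ) (hsub : ∀ x, ψ x ⊆ Ioo (-1) 1)
    (hval : ∀ x, (IsCompact (ψ x) ∧ IsConnected (ψ x)) ∨ ψ x = Ioo (-1) 1) :
    ∃ f : X → ℝ, Continuous f ∧ ∀ x, f x ∈ ψ x := by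
  have hne (x : X) : (ψ x).Nonempty :=
    (hval x).elim (·.2.nonempty) fun h => h ▸ nonempty_Ioo.2 (by norm_num)
  have hbddB (x : X) : BddBelow (ψ x) := bddBelow_Ioo.mono (hsub x)
  have hbddA (x : X) : BddAbove (ψ x) := bddAbove_Ioo.mono (hsub x)
  obtain ⟨f, hfc, hgf, hfh, hf1⟩ := exists_continuous_between_mem_Ioo
    (hψ.upperSemicontinuous_sInf hne hbddB) (hψ.lowerSemicontinuous_sSup hne hbddA)
    (fun x => csInf_le_csSup (hne x) (hbddB x) (hbddA x))
    (fun x => le_csInf (hne x) fun _ hy => (hsub x hy).1.le)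
    (fun x => csSup_le (hne x) fun _ hy => (hsub x hy).2.le) fun x => by
      rcases hval x with ⟨hc, -⟩ | h
      · exact .inl ⟨(hsub x (hc.sInf_mem (hne x))).1, (hsub x (hc.sSup_mem (hne x))).2⟩
      · rw [h, csInf_Ioo (by norm_num), csSup_Ioo (by norm_num)]
        norm_num
  refine ⟨f, hfc, fun x => ?_⟩
  rcases hval x with ⟨hc, hconn⟩ | h
  · exact eq_Icc_of_connected_compact hconn hc ▸ ⟨hgf x, hfh x⟩
  · exact h ▸ hf1 x

/-- Michael: an LSC map from a normal space into ℝ whose values are nonempty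
compact convex sets or all of ℝ admits a continuous selection. -/
theorem selection_of_normal
    {X : Type*} [TopologicalSpace X] [NormalSpace X]
    (φ : X → Set ℝ)
    (hlsc : ∀ U : Set ℝ, IsOpen U → IsOpen {x | (φ x ∩ U).Nonempty})
    (hval : ∀ x, ((φ x).Nonempty ∧ IsCompact (φ x) ∧ Convex ℝ (φ x)) ∨ φ x = Set.univ) :
    ∃ f : X → ℝ, Continuous f ∧ ∀ x, f x ∈ φ x := by
  let e := (orderIsoIooNegOneOne ℝ).toHomeomorph
  have he : IsEmbedding (Subtype.val ∘ e) := .comp .subtypeVal e.isEmbedding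
  obtain ⟨f, hfc, hf⟩ := exists_continuous_selection_of_subset_Ioo
    (ψ := fun x => (Subtype.val ∘ e) '' φ x)
    ((lowerHemicontinuous_iff_isOpen_inter_nonempty.2 hlsc).image he.continuous)
    (fun x => image_subset_iff.2 fun y _ => (e y).2) fun x => by
      rcases hval x with ⟨hne, hcpt, hconv⟩ | h
      · exact .inl ⟨hcpt.image he.continuous,
          (hconv.isConnected hne).image _ he.continuous.continuousOn⟩
      · rw [h, image_univ, range_comp, e.surjective.range_eq, image_univ, Subtype.range_coe]
        exact .inr rfl
  choose y hy hyf using hf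
  exact ⟨y, he.continuous_iff.2 (by rwa [← funext hyf] at hfc), hy⟩
end

section
/- Let X be a T₁ topological space such that every lower semicontinuous map φ : X → Set ℝ, whose values are each either a nonempty compact interval or all of ℝ, admits a continuous selection. Then X is normal. -/
/-!
Given disjoint closed sets `s` and `t`, take the carrier that is `{0}` on `s`, `{1}` on `t` and
`[0, 1]` elsewhere. It is lower semicontinuous: the points where it meets an open `U` are all
points, except those of `s` when `0 ∉ U` and those of `t` when `1 ∉ U`, so they form the
complement of a closed set. A continuous selection is then a Urysohn function for `s` and `t`,
and the preimages of disjoint neighbourhoods of `0` and `1` separate `s` from `t`.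
-/

open Set

lemma separatedNhds_of_mapsTo_singleton {X Y : Type*} [TopologicalSpace X] [TopologicalSpace Y]
    [T2Space Y] {s t : Set X} {f : X → Y} (hf : Continuous f) {a b : Y} (hab : a ≠ b)
    (hs : MapsTo f s {a}) (ht : MapsTo f t {b}) : SeparatedNhds s t :=
  ((SeparatedNhds.of_finite (finite_singleton a) (finite_singleton b)
    (disjoint_singleton.2 hab)).preimage hf).mono hs ht

section IntervalCarrier

variable {X : Type*} {s t : Set X} {a b : ℝ}

open Classical in
noncomputable def intervalCarrier (s t : Set X) (a b : ℝ) (x : X) : Set ℝ :=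
  if x ∈ s then {a} else if x ∈ t then {b} else Icc a b

lemma exists_intervalCarrier_eq_Icc (hab : a ≤ b) (x : X) :
    ∃ c d : ℝ, c ≤ d ∧ intervalCarrier s t a b x = Icc c d := by
  unfold intervalCarrier
  split_ifs
  · exact ⟨a, a, le_rfl, Icc_self a |>.symm⟩
  · exact ⟨b, b, le_rfl, Icc_self b |>.symm⟩
  · exact ⟨a, b, hab, rfl⟩

lemma intervalCarrier_subset_Icc (hab : a ≤ b) (x : X) : intervalCarrier s t a b x ⊆ Icc a b := by
  unfold intervalCarrier
  split_ifs
  · exact singleton_subset_iff.2 (left_mem_Icc.2 hab)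
  · exact singleton_subset_iff.2 (right_mem_Icc.2 hab)
  · exact Subset.rfl

lemma setOf_intervalCarrier_inter_nonempty (hst : Disjoint s t) {U : Set ℝ}
    (hU : (Icc a b ∩ U).Nonempty) :
    {x | (intervalCarrier s t a b x ∩ U).Nonempty} = (s ∩ {_x | a ∉ U} ∪ t ∩ {_x | b ∉ U})ᶜ := by
  ext x
  by_cases hxs : x ∈ s
  · have hxt : x ∉ t := hst.notMem_of_mem_left hxs
    simp [intervalCarrier, hxs, hxt]
  · by_cases hxt : x ∈ t <;> simp [intervalCarrier, hxs, hxt, hU]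

lemma isOpen_setOf_intervalCarrier_inter_nonempty [TopologicalSpace X] (hs : IsClosed s)
    (ht : IsClosed t) (hst : Disjoint s t) (hab : a ≤ b) (U : Set ℝ) :
    IsOpen {x | (intervalCarrier s t a b x ∩ U).Nonempty} := by
  by_cases hU : (Icc a b ∩ U).Nonempty
  · rw [setOf_intervalCarrier_inter_nonempty hst hU]
    exact ((hs.inter isClosed_const).union (ht.inter isClosed_const)).isOpen_compl
  · convert isOpen_empty
    refine eq_empty_of_forall_notMem fun x ⟨y, hyφ, hyU⟩ => hU ?_
    exact ⟨y, intervalCarrier_subset_Icc hab x hyφ, hyU⟩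

lemma mapsTo_left_of_mem_intervalCarrier {f : X → ℝ} (hf : ∀ x, f x ∈ intervalCarrier s t a b x) :
    MapsTo f s {a} := fun x hx => by
  simpa [intervalCarrier, hx] using hf x

lemma mapsTo_right_of_mem_intervalCarrier (hst : Disjoint s t) {f : X → ℝ}
    (hf : ∀ x, f x ∈ intervalCarrier s t a b x) : MapsTo f t {b} := fun x hx => by
  simpa [intervalCarrier, hx, hst.notMem_of_mem_right hx] using hf x

end IntervalCarrier

theorem normal_of_selection_property_general
    {X : Type*} [TopologicalSpace X]
    (hsel : ∀ φ : X → Set ℝ,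
      (∀ U : Set ℝ, IsOpen U → IsOpen {x | (φ x ∩ U).Nonempty}) →
      (∀ x, (∃ a b : ℝ, a ≤ b ∧ φ x = Set.Icc a b) ∨ φ x = Set.univ) →
      ∃ f : X → ℝ, Continuous f ∧ ∀ x, f x ∈ φ x) :
    NormalSpace X := by
  refine ⟨fun s t hs ht hst => ?_⟩
  obtain ⟨f, hf, hfφ⟩ := hsel (intervalCarrier s t 0 1)
    (fun U _ => isOpen_setOf_intervalCarrier_inter_nonempty hs ht hst zero_le_one U)
    (fun x => Or.inl (exists_intervalCarrier_eq_Icc zero_le_one x))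
  exact separatedNhds_of_mapsTo_singleton hf zero_ne_one
    (mapsTo_left_of_mem_intervalCarrier hfφ) (mapsTo_right_of_mem_intervalCarrier hst hfφ)

/-- Converse: if every LSC map into ℝ with values either a nonempty compact
interval or all of ℝ admits a continuous selection, then X is normal. -/
theorem normal_of_selection_property
    {X : Type*} [TopologicalSpace X] [T1Space X]
    (hsel : ∀ φ : X → Set ℝ,
      (∀ U : Set ℝ, IsOpen U → IsOpen {x | (φ x ∩ U).Nonempty}) →
      (∀ x, (∃ a b : ℝ, a ≤ b ∧ φ x = Set.Icc a b) ∨ φ x = Set.univ) →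
      ∃ f : X → ℝ, Continuous f ∧ ∀ x, f x ∈ φ x) :
    NormalSpace X :=
  normal_of_selection_property_general hsel
end

section
/- Let X be a paracompact topological space with covering dimension dim X = 0, and let Y be a complete metric space. Then every lower semicontinuous map φ : X → Set Y with nonempty closed values admits a continuous single-valued selection. -/
/-!
By lower semicontinuity, each point of `Y` stays `δ`-close to `φ x'` on an open set of `x'`.
A disjoint open refinement of these sets, with one such point chosen per piece, is a locally
constant `δ`-approximate selection. Intersecting `φ` with the `2⁻ⁿ`-ball around the current
approximation keeps it lower semicontinuous, so iterating gives continuous `Fₙ` with `Fₙ x`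
within `2⁻ⁿ` of `φ x` and `dist Fₙ Fₙ₊₁ ≤ 2 · 2⁻ⁿ`. By completeness they converge uniformly
to a continuous map, whose values lie in the closed sets `φ x`.
-/

open Set Filter Topology

/-- Covering dimension zero, `dim X = 0`. -/
def HasDisjointOpenRefinements (X : Type*) [TopologicalSpace X] : Prop :=
  ∀ 𝒰 : Set (Set X), (∀ U ∈ 𝒰, IsOpen U) → ⋃₀ 𝒰 = univ →
    ∃ 𝒱 : Set (Set X), (∀ V ∈ 𝒱, IsOpen V) ∧ (∀ V ∈ 𝒱, ∃ U ∈ 𝒰, V ⊆ U) ∧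
      ⋃₀ 𝒱 = univ ∧ 𝒱.Pairwise Disjoint

theorem exists_tendstoUniformly_of_dist_le_geometric {X Y : Type*} [PseudoMetricSpace Y]
    [CompleteSpace Y] {F : ℕ → X → Y} {C r : ℝ} (hr₀ : 0 ≤ r) (hr₁ : r < 1)
    (hF : ∀ n x, dist (F n x) (F (n + 1) x) ≤ C * r ^ n) :
    ∃ f : X → Y, TendstoUniformly F f atTop := by
  choose f hf using fun x ↦ cauchySeq_tendsto_of_complete
    (cauchySeq_of_le_geometric r C hr₁ (hF · x))
  refine ⟨f, Metric.tendstoUniformly_iff.2 fun ε hε ↦ ?_⟩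
  have hbound : Tendsto (fun n ↦ C * r ^ n / (1 - r)) atTop (𝓝 0) := by
    simpa using ((tendsto_pow_atTop_nhds_zero_of_lt_one hr₀ hr₁).const_mul C).div_const (1 - r)
  filter_upwards [hbound.eventually (gt_mem_nhds hε)] with n hn x
  rw [dist_comm]
  exact (dist_le_of_le_geometric_of_tendsto r C hr₁ (hF · x) (hf x) n).trans_lt hn

theorem IsClosed.mem_of_tendsto_of_exists_dist_lt {Y : Type*} [PseudoMetricSpace Y] {s : Set Y}
    (hs : IsClosed s) {u : ℕ → Y} {a : Y} (hu : Tendsto u atTop (𝓝 a)) {ε : ℕ → ℝ}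
    (hε : Tendsto ε atTop (𝓝 0)) (h : ∀ n, ∃ y ∈ s, dist (u n) y < ε n) : a ∈ s := by
  choose y hys hy using h
  exact hs.mem_of_tendsto (hu.congr_dist (squeeze_zero (fun _ ↦ dist_nonneg) (hy · |>.le) hε))
    (.of_forall hys)

namespace HasDisjointOpenRefinements

variable {X Y : Type*} [TopologicalSpace X]

theorem exists_isLocallyConstant (hX : HasDisjointOpenRefinements X) (P : X → Y → Prop)
    (h : ∀ x, ∃ y, ∀ᶠ x' in 𝓝 x, P x' y) : ∃ f : X → Y, IsLocallyConstant f ∧ ∀ x, P x (f x) := by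
  obtain ⟨𝒱, hVo, hVsub, hVcov, hVdisj⟩ := hX {U | IsOpen U ∧ ∃ y, ∀ x ∈ U, P x y}
    (fun U hU ↦ hU.1) <| eq_univ_of_forall fun x ↦ by
      obtain ⟨y, hy⟩ := h x
      obtain ⟨U, hUP, hUo, hxU⟩ := eventually_nhds_iff.1 hy
      exact ⟨U, ⟨hUo, y, hUP⟩, hxU⟩
  choose V hV hxV using fun x ↦ sUnion_eq_univ_iff.1 hVcov x
  have hwitness : ∀ W : 𝒱, ∃ y, ∀ x ∈ (W : Set X), P x y := fun W ↦ by
    obtain ⟨U, ⟨-, y, hy⟩, hWU⟩ := hVsub W W.2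
    exact ⟨y, fun x hx ↦ hy x (hWU hx)⟩
  choose y hy using hwitness
  have hVeq : ∀ x, ∀ x' ∈ V x, V x' = V x := fun x x' hx' ↦
    hVdisj.eq (hV x') (hV x) (not_disjoint_iff.2 ⟨x', hxV x', hx'⟩)
  have hpiece : IsLocallyConstant fun x ↦ (⟨V x, hV x⟩ : 𝒱) :=
    (IsLocallyConstant.iff_eventually_eq _).2 fun x ↦ by
      filter_upwards [(hVo _ (hV x)).mem_nhds (hxV x)] with x' hx'
      exact Subtype.ext (hVeq x x' hx')
  exact ⟨_, hpiece.comp y, fun x ↦ hy _ x (hxV x)⟩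

variable [PseudoMetricSpace Y]

theorem exists_isLocallyConstant_dist_lt (hX : HasDisjointOpenRefinements X) {ψ : X → Set Y}
    (hψ : LowerHemicontinuous ψ) (hne : ∀ x, (ψ x).Nonempty) {δ : ℝ} (hδ : 0 < δ) :
    ∃ f : X → Y, IsLocallyConstant f ∧ ∀ x, ∃ y ∈ ψ x, dist (f x) y < δ := by
  refine hX.exists_isLocallyConstant (fun x y ↦ ∃ y' ∈ ψ x, dist y y' < δ) fun x ↦ ?_
  obtain ⟨y, hy⟩ := hne x
  refine ⟨y, (lowerHemicontinuousAt_iff.1 (hψ x) _ Metric.isOpen_ball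
    ⟨y, hy, Metric.mem_ball_self hδ⟩).mono fun x' ⟨y', hy', hyy'⟩ ↦ ⟨y', hy', ?_⟩⟩
  rwa [dist_comm, ← Metric.mem_ball]

theorem exists_continuous_dist_lt_of_dist_lt (hX : HasDisjointOpenRefinements X)
    {φ : X → Set Y} (hφ : LowerHemicontinuous φ) {g : X → Y} (hg : Continuous g) {ε δ : ℝ}
    (hδ : 0 < δ) (hgφ : ∀ x, ∃ y ∈ φ x, dist (g x) y < ε) :
    ∃ f : X → Y, Continuous f ∧ (∀ x, ∃ y ∈ φ x, dist (f x) y < δ) ∧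
      ∀ x, dist (f x) (g x) < δ + ε := by
  have hψ : LowerHemicontinuous fun x ↦ φ x ∩ Metric.ball (g x) ε :=
    hφ.inter_hasOpenCGraph (isOpen_lt (continuous_snd.dist (hg.comp continuous_fst))
      continuous_const)
  obtain ⟨f, hf, hfψ⟩ := hX.exists_isLocallyConstant_dist_lt hψ
    (fun x ↦ (hgφ x).imp fun y ⟨hy, hgy⟩ ↦ ⟨hy, by rwa [Metric.mem_ball, dist_comm]⟩) hδ
  refine ⟨f, hf.continuous, fun x ↦ ?_, fun x ↦ ?_⟩
  · obtain ⟨y, ⟨hy, -⟩, hfy⟩ := hfψ x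
    exact ⟨y, hy, hfy⟩
  · obtain ⟨y, ⟨-, hyg⟩, hfy⟩ := hfψ x
    exact (dist_triangle _ y _).trans_lt (add_lt_add hfy hyg)

theorem exists_seq_continuous_approx (hX : HasDisjointOpenRefinements X) {φ : X → Set Y}
    (hφ : LowerHemicontinuous φ) (hne : ∀ x, (φ x).Nonempty) :
    ∃ F : ℕ → X → Y, (∀ n, Continuous (F n)) ∧
      (∀ n x, ∃ y ∈ φ x, dist (F n x) y < (1 / 2 : ℝ) ^ n) ∧
      ∀ n x, dist (F n x) (F (n + 1) x) ≤ 2 * (1 / 2 : ℝ) ^ n := by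
  obtain ⟨g₀, hg₀, hg₀φ⟩ := hX.exists_isLocallyConstant_dist_lt hφ hne one_pos
  have : Nonempty (X → Y) := ⟨g₀⟩
  have step (n : ℕ) (g : X → Y)
      (hg : Continuous g ∧ ∀ x, ∃ y ∈ φ x, dist (g x) y < (1 / 2 : ℝ) ^ n) :
      ∃ f : X → Y, (Continuous f ∧ ∀ x, ∃ y ∈ φ x, dist (f x) y < (1 / 2 : ℝ) ^ (n + 1)) ∧
        ∀ x, dist (g x) (f x) ≤ 2 * (1 / 2 : ℝ) ^ n := by
    obtain ⟨f, hf, hfφ, hfg⟩ := hX.exists_continuous_dist_lt_of_dist_lt hφ hg.1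
      (δ := (1 / 2 : ℝ) ^ (n + 1)) (by positivity) hg.2
    refine ⟨f, ⟨hf, hfφ⟩, fun x ↦ ?_⟩
    rw [dist_comm]
    linarith [hfg x, pow_succ (1 / 2 : ℝ) n, pow_pos (one_half_pos (α := ℝ)) n]
  choose! next hnext hnext_dist using step
  let F : ℕ → X → Y := fun n ↦ n.rec g₀ next
  have hF (n : ℕ) : Continuous (F n) ∧ ∀ x, ∃ y ∈ φ x, dist (F n x) y < (1 / 2 : ℝ) ^ n := by
    induction n with
    | zero => exact ⟨hg₀.continuous, by rw [pow_zero]; exact hg₀φ⟩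
    | succ n ih => exact hnext n (F n) ih
  exact ⟨F, fun n ↦ (hF n).1, fun n ↦ (hF n).2, fun n ↦ hnext_dist n (F n) (hF n)⟩

end HasDisjointOpenRefinements

theorem zero_dimensional_selection_general
    {X : Type*} [TopologicalSpace X]
    (hdim : ∀ 𝒰 : Set (Set X), (∀ U ∈ 𝒰, IsOpen U) → ⋃₀ 𝒰 = Set.univ →
      ∃ 𝒱 : Set (Set X), (∀ V ∈ 𝒱, IsOpen V) ∧ (∀ V ∈ 𝒱, ∃ U ∈ 𝒰, V ⊆ U) ∧
        ⋃₀ 𝒱 = Set.univ ∧ 𝒱.Pairwise Disjoint)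
    {Y : Type*} [MetricSpace Y] [CompleteSpace Y]
    (φ : X → Set Y)
    (hlsc : ∀ U : Set Y, IsOpen U → IsOpen {x | (φ x ∩ U).Nonempty})
    (hne : ∀ x, (φ x).Nonempty)
    (hcl : ∀ x, IsClosed (φ x)) :
    ∃ f : X → Y, Continuous f ∧ ∀ x, f x ∈ φ x := by
  have hX : HasDisjointOpenRefinements X := hdim
  obtain ⟨F, hFc, hFφ, hF_dist⟩ := hX.exists_seq_continuous_approx
    (lowerHemicontinuous_iff_isOpen_inter_nonempty.2 hlsc) hne
  obtain ⟨f, hf⟩ := exists_tendstoUniformly_of_dist_le_geometric (by norm_num) (by norm_num) hF_dist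
  refine ⟨f, hf.continuous (.of_forall hFc), fun x ↦ ?_⟩
  exact (hcl x).mem_of_tendsto_of_exists_dist_lt (hf.tendsto_at x)
    (tendsto_pow_atTop_nhds_zero_of_lt_one (by norm_num) (by norm_num)) (hFφ · x)

/-- Michael's zero-dimensional selection theorem. -/
theorem zero_dimensional_selection
    {X : Type*} [TopologicalSpace X] [ParacompactSpace X]
    (hdim : ∀ 𝒰 : Set (Set X), (∀ U ∈ 𝒰, IsOpen U) → ⋃₀ 𝒰 = Set.univ →
      ∃ 𝒱 : Set (Set X), (∀ V ∈ 𝒱, IsOpen V) ∧ (∀ V ∈ 𝒱, ∃ U ∈ 𝒰, V ⊆ U) ∧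
        ⋃₀ 𝒱 = Set.univ ∧ 𝒱.Pairwise Disjoint)
    {Y : Type*} [MetricSpace Y] [CompleteSpace Y]
    (φ : X → Set Y)
    (hlsc : ∀ U : Set Y, IsOpen U → IsOpen {x | (φ x ∩ U).Nonempty})
    (hne : ∀ x, (φ x).Nonempty)
    (hcl : ∀ x, IsClosed (φ x)) :
    ∃ f : X → Y, Continuous f ∧ ∀ x, f x ∈ φ x :=
  zero_dimensional_selection_general hdim φ hlsc hne hcl
end

section
/- Let T : E → F be a continuous linear surjection between Banach spaces. Then there exists a continuous (not necessarily linear) map s : F → E with T(s(y)) = y for all y ∈ F. Moreover s can be chosen positively homogeneous: s(λy) = λ s(y) for all λ ≥ 0. -/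
/-!
By the open mapping theorem every `y` has a preimage of norm `≤ C‖y‖`. These preimages are
locally constant selections of the convex-valued map `y ↦ {x | ‖T x - y‖ < ε, ‖x‖ < C‖y‖ + ε}`,
so a partition of unity glues them into a continuous `h` with `T ∘ h` within `ε` of the identity.
Extending `h` from the unit sphere by positive homogeneity gives a continuous positively
homogeneous `f` with `‖f y‖ ≤ (C + ε)‖y‖` and `‖T (f y) - y‖ ≤ ε‖y‖`. For `ε < 1` the defect
`D y = y - T (f y)` contracts, and `s y = ∑ₙ f (Dⁿ y)` is an exact section, because
`T (f (Dⁿ y)) = Dⁿ y - Dⁿ⁺¹ y` telescopes.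
-/

open Set Filter Topology Metric Function

section Homogenize

variable {E F : Type*} [NormedAddCommGroup E] [NormedSpace ℝ E]
  [NormedAddCommGroup F] [NormedSpace ℝ F]

/-- Only the values of `h` on the unit sphere matter; at `y = 0` the value is `0`. -/
noncomputable def homogenize (h : F → E) (y : F) : E := ‖y‖ • h (‖y‖⁻¹ • y)

theorem homogenize_smul_of_nonneg (h : F → E) {c : ℝ} (hc : 0 ≤ c) (y : F) :
    homogenize h (c • y) = c • homogenize h y := by
  rcases hc.eq_or_lt with rfl | hc
  · simp [homogenize]
  have hproj : ‖c • y‖⁻¹ • c • y = ‖y‖⁻¹ • y := by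
    rw [norm_smul, Real.norm_of_nonneg hc.le, smul_smul, mul_inv, mul_right_comm,
      inv_mul_cancel₀ hc.ne', one_mul]
  rw [homogenize, hproj, norm_smul, Real.norm_of_nonneg hc.le, mul_smul, homogenize]

theorem homogenize_id : homogenize (id : F → F) = id := by
  funext y
  rcases eq_or_ne y 0 with rfl | hy
  · simp [homogenize]
  · simp [homogenize, smul_smul, mul_inv_cancel₀ (norm_ne_zero_iff.mpr hy)]

theorem homogenize_sub (h k : F → E) : homogenize (h - k) = homogenize h - homogenize k := by
  funext y
  simp [homogenize, smul_sub]

theorem homogenize_comp {G M : Type*} [NormedAddCommGroup G] [NormedSpace ℝ G] [FunLike M E G]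
    [LinearMapClass M ℝ E G] (T : M) (h : F → E) :
    homogenize (⇑T ∘ h) = ⇑T ∘ homogenize h := by
  funext y
  simp [homogenize, map_smul]

theorem norm_homogenize_le {h : F → E} {C : ℝ} (hC : ∀ z ∈ sphere (0 : F) 1, ‖h z‖ ≤ C)
    (y : F) : ‖homogenize h y‖ ≤ C * ‖y‖ := by
  rcases eq_or_ne y 0 with rfl | hy
  · simp [homogenize]
  rw [homogenize, norm_smul, norm_norm, mul_comm]
  exact mul_le_mul_of_nonneg_right
    (hC _ (mem_sphere_zero_iff_norm.mpr (norm_smul_inv_norm hy))) (norm_nonneg y)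

theorem continuous_homogenize {h : F → E} {C : ℝ} (hh : Continuous h)
    (hC : ∀ z ∈ sphere (0 : F) 1, ‖h z‖ ≤ C) : Continuous (homogenize h) := by
  refine continuous_iff_continuousAt.mpr fun y => ?_
  rcases eq_or_ne y 0 with rfl | hy
  · have hzero : homogenize h 0 = 0 := by simp [homogenize]
    rw [ContinuousAt, hzero]
    exact squeeze_zero_norm (norm_homogenize_le hC)
      ((continuous_const.mul continuous_norm).tendsto' 0 0 (by simp))
  · have hny : ‖y‖ ≠ 0 := norm_ne_zero_iff.mpr hy
    exact continuous_norm.continuousAt.smul (hh.continuousAt.comp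
      ((continuous_norm.continuousAt.inv₀ hny).smul continuousAt_id))

end Homogenize

theorem norm_iterate_le_of_norm_le {α : Type*} [Norm α] {D : α → α} {q : ℝ} (hq : 0 ≤ q)
    (hD : ∀ y, ‖D y‖ ≤ q * ‖y‖) (n : ℕ) (y : α) : ‖D^[n] y‖ ≤ q ^ n * ‖y‖ := by
  induction n with
  | zero => simp
  | succ n ih =>
    rw [iterate_succ_apply', pow_succ', mul_assoc]
    exact (hD _).trans (mul_le_mul_of_nonneg_left ih hq)

theorem hasSum_sub_succ_of_tendsto_zero {G : Type*} [AddCommGroup G] [TopologicalSpace G]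
    [IsTopologicalAddGroup G] [T2Space G] {a : ℕ → G}
    (hs : Summable fun n => a n - a (n + 1)) (ha : Tendsto a atTop (𝓝 0)) :
    HasSum (fun n => a n - a (n + 1)) (a 0) := by
  convert hs.hasSum
  refine tendsto_nhds_unique ?_ hs.hasSum.tendsto_sum_nat
  simp_rw [Finset.sum_range_sub']
  simpa using tendsto_const_nhds.sub ha

theorem continuous_tsum_of_norm_le_mul_norm {E F : Type*} [NormedAddCommGroup E]
    [CompleteSpace E] [SeminormedAddCommGroup F] {u : ℕ → F → E} {a : ℕ → ℝ}
    (hu : ∀ n, Continuous (u n)) (ha : Summable a) (hua : ∀ n y, ‖u n y‖ ≤ a n * ‖y‖) :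
    Continuous fun y => ∑' n, u n y := by
  refine continuous_iff_continuousAt.mpr fun y => ?_
  have hball : ContinuousOn (fun y => ∑' n, u n y) (ball 0 (‖y‖ + 1)) := by
    refine continuousOn_tsum (fun n => (hu n).continuousOn) (ha.abs.mul_right (‖y‖ + 1))
      fun n x hx => ?_
    rw [mem_ball_zero_iff] at hx
    calc ‖u n x‖ ≤ a n * ‖x‖ := hua n x
      _ ≤ |a n| * ‖x‖ := mul_le_mul_of_nonneg_right (le_abs_self _) (norm_nonneg x)
      _ ≤ |a n| * (‖y‖ + 1) := mul_le_mul_of_nonneg_left hx.le (abs_nonneg _)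
  exact hball.continuousAt (isOpen_ball.mem_nhds (by simp))

namespace ContinuousLinearMap

variable {E F : Type*} [NormedAddCommGroup E] [NormedSpace ℝ E]
  [NormedAddCommGroup F] [NormedSpace ℝ F]

theorem exists_continuous_approx_rightInverse (T : E →L[ℝ] F) {C ε : ℝ}
    (hT : ∀ y, ∃ x, T x = y ∧ ‖x‖ ≤ C * ‖y‖) (hε : 0 < ε) :
    ∃ h : F → E, Continuous h ∧ ∀ y, ‖T (h y) - y‖ < ε ∧ ‖h y‖ < C * ‖y‖ + ε := by
  set t : F → Set E := fun y => T ⁻¹' ball y ε ∩ ball 0 (C * ‖y‖ + ε)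
  have ht : ∀ y, Convex ℝ (t y) := fun y =>
    ((convex_ball y ε).linear_preimage T.toLinearMap).inter (convex_ball 0 _)
  have hloc : ∀ y, ∃ x, ∀ᶠ y' in 𝓝 y, x ∈ t y' := by
    intro y
    obtain ⟨x, rfl, hx⟩ := hT y
    refine ⟨x, ?_⟩
    have hnorm : ∀ᶠ y' in 𝓝 (T x), ‖x‖ < C * ‖y'‖ + ε :=
      continuousAt_const.eventually_lt (by fun_prop) (by linarith)
    filter_upwards [ball_mem_nhds (T x) hε, hnorm] with y' hy' hx'
    exact ⟨mem_ball_comm.mp hy', mem_ball_zero_iff.mpr hx'⟩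
  obtain ⟨h, hh⟩ := exists_continuous_forall_mem_convex_of_local_const ht hloc
  exact ⟨h, h.continuous, fun y => ⟨mem_ball_iff_norm.mp (hh y).1,
    mem_ball_zero_iff.mp (hh y).2⟩⟩

theorem exists_continuous_homogeneous_approx_rightInverse (T : E →L[ℝ] F) {C ε : ℝ}
    (hT : ∀ y, ∃ x, T x = y ∧ ‖x‖ ≤ C * ‖y‖) (hε : 0 < ε) :
    ∃ f : F → E, Continuous f ∧ (∀ c : ℝ, 0 ≤ c → ∀ y, f (c • y) = c • f y) ∧
      (∀ y, ‖f y‖ ≤ (C + ε) * ‖y‖) ∧ ∀ y, ‖T (f y) - y‖ ≤ ε * ‖y‖ := by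
  obtain ⟨h, hh, hhT⟩ := T.exists_continuous_approx_rightInverse hT hε
  have hbound : ∀ z ∈ sphere (0 : F) 1, ‖h z‖ ≤ C + ε := fun z hz => by
    simpa [mem_sphere_zero_iff_norm.mp hz] using (hhT z).2.le
  have hdefect : ∀ z ∈ sphere (0 : F) 1, ‖T (h z) - z‖ ≤ ε := fun z _ => (hhT z).1.le
  have hsub : (fun y => T (homogenize h y) - y) = homogenize fun z => T (h z) - z := by
    rw [show (fun z => T (h z) - z) = ⇑T ∘ h - id from rfl, homogenize_sub, homogenize_comp,
      homogenize_id]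
    rfl
  refine ⟨homogenize h, continuous_homogenize hh hbound,
    fun c hc y => homogenize_smul_of_nonneg h hc y, norm_homogenize_le hbound, fun y => ?_⟩
  rw [congrFun hsub y]
  exact norm_homogenize_le hdefect y

theorem exists_continuous_homogeneous_rightInverse_of_approx [CompleteSpace E] (T : E →L[ℝ] F) {f : F → E}
    {C q : ℝ} (hf : Continuous f) (hf_smul : ∀ c : ℝ, 0 ≤ c → ∀ y, f (c • y) = c • f y)
    (hfC : ∀ y, ‖f y‖ ≤ C * ‖y‖) (hq0 : 0 ≤ q) (hq1 : q < 1)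
    (hfT : ∀ y, ‖T (f y) - y‖ ≤ q * ‖y‖) :
    ∃ s : F → E, Continuous s ∧ (∀ y, T (s y) = y) ∧
      ∀ c : ℝ, 0 ≤ c → ∀ y, s (c • y) = c • s y := by
  set D : F → F := fun y => y - T (f y)
  have hDq : ∀ n y, ‖D^[n] y‖ ≤ q ^ n * ‖y‖ :=
    norm_iterate_le_of_norm_le hq0 fun y => by rw [norm_sub_rev]; exact hfT y
  have hterm : ∀ n y, ‖f (D^[n] y)‖ ≤ |C| * q ^ n * ‖y‖ := fun n y =>
    calc ‖f (D^[n] y)‖ ≤ C * ‖D^[n] y‖ := hfC _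
      _ ≤ |C| * ‖D^[n] y‖ := mul_le_mul_of_nonneg_right (le_abs_self C) (norm_nonneg _)
      _ ≤ |C| * q ^ n * ‖y‖ := by
        rw [mul_assoc]; exact mul_le_mul_of_nonneg_left (hDq n y) (abs_nonneg C)
  have hgeo : Summable fun n => |C| * q ^ n :=
    (summable_geometric_of_lt_one hq0 hq1).mul_left |C|
  have hsum : ∀ y, Summable fun n => f (D^[n] y) := fun y =>
    Summable.of_norm_bounded (hgeo.mul_right ‖y‖) (hterm · y)
  refine ⟨fun y => ∑' n, f (D^[n] y), ?_, fun y => ?_, fun c hc y => ?_⟩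
  · have hD : Continuous D := continuous_id.sub (T.continuous.comp hf)
    exact continuous_tsum_of_norm_le_mul_norm (fun n => hf.comp (hD.iterate n)) hgeo hterm
  · have htel : ∀ n, T (f (D^[n] y)) = D^[n] y - D^[n + 1] y := fun n => by
      rw [iterate_succ_apply', sub_sub_cancel]
    have hlim : Tendsto (fun n => D^[n] y) atTop (𝓝 0) :=
      squeeze_zero_norm (hDq · y) (by
        simpa using (tendsto_pow_atTop_nhds_zero_of_lt_one hq0 hq1).mul_const ‖y‖)
    have hsumT := (hsum y).mapL T
    simp only [htel] at hsumT
    rw [T.map_tsum (hsum y)]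
    simp only [htel]
    exact (hasSum_sub_succ_of_tendsto_zero hsumT hlim).tsum_eq
  · have hcomm : Function.Commute D (c • ·) := fun y => by simp [D, hf_smul c hc, smul_sub]
    simp only [(hcomm.iterate_left _).eq, hf_smul c hc]
    exact (hsum y).tsum_const_smul c

end ContinuousLinearMap

/-- Bartle–Graves: a continuous linear surjection of Banach spaces admits a
continuous, positively homogeneous section. -/
theorem bartle_graves
    {E F : Type*} [NormedAddCommGroup E] [NormedSpace ℝ E] [CompleteSpace E]
    [NormedAddCommGroup F] [NormedSpace ℝ F] [CompleteSpace F]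
    (T : E →L[ℝ] F) (hT : Function.Surjective T) :
    ∃ s : F → E, Continuous s ∧ (∀ y, T (s y) = y) ∧
      ∀ (c : ℝ), 0 ≤ c → ∀ y, s (c • y) = c • s y := by
  obtain ⟨C, -, hC⟩ := T.exists_preimage_norm_le hT
  obtain ⟨f, hf, hf_smul, hfC, hfT⟩ :=
    T.exists_continuous_homogeneous_approx_rightInverse hC one_half_pos
  exact T.exists_continuous_homogeneous_rightInverse_of_approx hf hf_smul hfC one_half_pos.le one_half_lt_one hfT
end

section
/- Let T : E → F be a continuous linear surjection between Banach spaces and let ε > 0. Then there exists a continuous map s : F → E with T(s(y)) = y and ‖s(y)‖ ≤ (1+ε)·inf{‖x‖ : T(x) = y} for all y ∈ F. -/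
/-!
Write `q y` for the infimum of `‖x‖` over the fibre `T x = y`, i.e. the quotient norm. By the open
mapping theorem `q y ≤ C ‖y‖`, so `q` is Lipschitz, and `‖y‖ ≤ ‖T‖ q y` makes it positive off `0`.
On `F \ {0}` the sets `{x | ‖x‖ < a q y, ‖T x - y‖ < θ q y}` are convex and contain a point that
works on a whole neighbourhood of `y`, so a partition of unity yields a continuous approximate
section `G` with `‖G y‖ ≤ a q y` and `q (y - T (G y)) ≤ β q y` (with `G 0 = 0`). Correcting the
residual `r₀ = y`, `rₙ₊₁ = rₙ - T (G rₙ)` geometrically, `s y = ∑ G rₙ` is a locally uniformly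
convergent series with `T (s y) = y` and `‖s y‖ ≤ a / (1 - β) q y`; take `a / (1 - β) = 1 + ε`.
-/

open Metric Set Filter Topology Pointwise

theorem continuous_of_continuousOn_compl_zero {E F : Type*} [NormedAddCommGroup E]
    [NormedAddCommGroup F] {f : F → E} {K : ℝ}
    (hf : ContinuousOn f {0}ᶜ) (hK : ∀ y, ‖f y‖ ≤ K * ‖y‖) : Continuous f := by
  refine continuous_iff_continuousAt.2 fun y => ?_
  rcases eq_or_ne y 0 with rfl | hy
  · have hf0 : f 0 = 0 := norm_le_zero_iff.1 (by simpa using hK 0)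
    rw [ContinuousAt, hf0]
    refine squeeze_zero_norm hK ?_
    simpa using (tendsto_norm_zero (E := F)).const_mul K
  · exact hf.continuousAt (isOpen_compl_singleton.mem_nhds hy)

theorem continuousOn_compl_zero_dite {E F : Type*} [TopologicalSpace E] [Zero E]
    [TopologicalSpace F] [Zero F] [DecidableEq F] {g : ({0}ᶜ : Set F) → E} (hg : Continuous g) :
    ContinuousOn (fun y => if hy : y = 0 then 0 else g ⟨y, hy⟩) {0}ᶜ := by
  rw [continuousOn_iff_continuous_domRestrict]
  convert hg using 1
  funext y
  exact dif_neg y.2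

namespace ContinuousLinearMap

section FiberNorm

variable {𝕜 E F : Type*} [NontriviallyNormedField 𝕜]
  [NormedAddCommGroup E] [NormedSpace 𝕜 E] [NormedAddCommGroup F] [NormedSpace 𝕜 F]
  {T : E →L[𝕜] F}

variable (T) in
noncomputable def fiberNorm (y : F) : ℝ := sInf (Norm.norm '' (T ⁻¹' {y}))

theorem fiberNorm_nonneg (y : F) : 0 ≤ T.fiberNorm y :=
  Real.sInf_nonneg <| by rintro _ ⟨x, -, rfl⟩; exact norm_nonneg x

theorem fiberNorm_le {x : E} {y : F} (hx : T x = y) : T.fiberNorm y ≤ ‖x‖ := by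
  refine csInf_le ⟨0, ?_⟩ ⟨x, hx, rfl⟩
  rintro _ ⟨x, -, rfl⟩
  exact norm_nonneg x

theorem exists_norm_lt_fiberNorm_add (hT : Function.Surjective T) {η : ℝ} (hη : 0 < η)
    (y : F) : ∃ x, T x = y ∧ ‖x‖ < T.fiberNorm y + η := by
  obtain ⟨x₀, hx₀⟩ := hT y
  have hne : (Norm.norm '' (T ⁻¹' {y})).Nonempty := ⟨‖x₀‖, x₀, hx₀, rfl⟩
  obtain ⟨_, ⟨x, hx, rfl⟩, hlt⟩ :=
    exists_lt_of_csInf_lt hne (lt_add_of_pos_right (T.fiberNorm y) hη)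
  exact ⟨x, hx, hlt⟩

theorem fiberNorm_le_mul_norm {C : ℝ} (hC : ∀ y, ∃ x, T x = y ∧ ‖x‖ ≤ C * ‖y‖) (y : F) :
    T.fiberNorm y ≤ C * ‖y‖ :=
  let ⟨_, hx, hxC⟩ := hC y
  (fiberNorm_le hx).trans hxC

theorem fiberNorm_add_le (hT : Function.Surjective T) (a b : F) :
    T.fiberNorm (a + b) ≤ T.fiberNorm a + T.fiberNorm b := by
  refine le_of_forall_pos_lt_add fun η hη => ?_
  obtain ⟨x, rfl, hx⟩ := exists_norm_lt_fiberNorm_add hT (half_pos hη) a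
  obtain ⟨x', rfl, hx'⟩ := exists_norm_lt_fiberNorm_add hT (half_pos hη) b
  calc T.fiberNorm (T x + T x') ≤ ‖x + x'‖ := fiberNorm_le (map_add T x x')
    _ ≤ ‖x‖ + ‖x'‖ := norm_add_le x x'
    _ < _ := by linarith

theorem lipschitzWith_fiberNorm (hT : Function.Surjective T) {C : ℝ}
    (hC : ∀ y, ∃ x, T x = y ∧ ‖x‖ ≤ C * ‖y‖) : LipschitzWith C.toNNReal T.fiberNorm :=
  LipschitzWith.of_le_add_mul' C fun a b => by
    calc T.fiberNorm a = T.fiberNorm (b + (a - b)) := by rw [add_sub_cancel]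
      _ ≤ T.fiberNorm b + T.fiberNorm (a - b) := fiberNorm_add_le hT b (a - b)
      _ ≤ T.fiberNorm b + C * dist a b := by
        rw [dist_eq_norm]; gcongr; exact fiberNorm_le_mul_norm hC _

theorem continuous_fiberNorm [CompleteSpace E] [CompleteSpace F]
    (hT : Function.Surjective T) : Continuous T.fiberNorm :=
  let ⟨_, _, hC⟩ := T.exists_preimage_norm_le hT
  (lipschitzWith_fiberNorm hT hC).continuous

theorem norm_le_opNorm_mul_fiberNorm (hT : Function.Surjective T) (y : F) :
    ‖y‖ ≤ ‖T‖ * T.fiberNorm y := by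
  obtain ⟨x₀, hx₀⟩ := hT y
  rw [fiberNorm, ← smul_eq_mul, ← Real.sInf_smul_of_nonneg (norm_nonneg T)]
  refine le_csInf ⟨‖T‖ • ‖x₀‖, Set.smul_mem_smul_set ⟨x₀, hx₀, rfl⟩⟩ ?_
  rintro _ ⟨_, ⟨x, rfl, rfl⟩, rfl⟩
  exact T.le_opNorm x

theorem fiberNorm_pos (hT : Function.Surjective T) {y : F} (hy : y ≠ 0) :
    0 < T.fiberNorm y :=
  pos_of_mul_pos_right ((norm_pos_iff.2 hy).trans_le (norm_le_opNorm_mul_fiberNorm hT y))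
    (norm_nonneg T)

end FiberNorm

section Selection

variable {E F : Type*}
  [NormedAddCommGroup E] [NormedSpace ℝ E] [NormedAddCommGroup F] [NormedSpace ℝ F]
  {T : E →L[ℝ] F}

theorem exists_continuous_approx_section_on_compl_zero (hT : Function.Surjective T)
    (hq : Continuous T.fiberNorm) {a θ : ℝ} (ha : 1 < a) (hθ : 0 < θ) :
    ∃ g : C(({0}ᶜ : Set F), E), ∀ y,
      ‖g y‖ < a * T.fiberNorm y ∧ ‖T (g y) - y‖ < θ * T.fiberNorm y := by
  have hconv (y : ({0}ᶜ : Set F)) :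
      Convex ℝ (ball 0 (a * T.fiberNorm y) ∩ T ⁻¹' ball (y : F) (θ * T.fiberNorm y)) :=
    (convex_ball _ _).inter ((convex_ball _ _).linear_preimage T.toLinearMap)
  have hloc (y : ({0}ᶜ : Set F)) : ∃ x : E, ∀ᶠ v : ({0}ᶜ : Set F) in 𝓝 y,
      x ∈ ball 0 (a * T.fiberNorm v) ∩ T ⁻¹' ball (v : F) (θ * T.fiberNorm v) := by
    have hqy := fiberNorm_pos hT y.2
    obtain ⟨x, hx, hxq⟩ :=
      exists_norm_lt_fiberNorm_add hT (mul_pos (sub_pos.2 ha) hqy) (y : F)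
    let U : Set F := {v | ‖x‖ < a * T.fiberNorm v ∧ dist (T x) v < θ * T.fiberNorm v}
    have hU : IsOpen U :=
      (isOpen_lt continuous_const (continuous_const.mul hq)).inter
        (isOpen_lt (continuous_const.dist continuous_id) (continuous_const.mul hq))
    have hyU : (y : F) ∈ U := ⟨by linarith, by rw [hx, dist_self]; positivity⟩
    refine ⟨x, (continuous_subtype_val.tendsto y).eventually (hU.mem_nhds hyU) |>.mono ?_⟩
    rintro v ⟨hv₁, hv₂⟩
    exact ⟨mem_ball_zero_iff.2 hv₁, hv₂⟩
  obtain ⟨g, hg⟩ := exists_continuous_forall_mem_convex_of_local_const hconv hloc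
  exact ⟨g, fun y => ⟨mem_ball_zero_iff.1 (hg y).1, dist_eq_norm (T (g y)) y ▸ (hg y).2⟩⟩

theorem exists_approx_section [CompleteSpace E] [CompleteSpace F] (hT : Function.Surjective T)
    {a β : ℝ} (ha : 1 < a) (hβ : 0 < β) :
    ∃ G : F → E, Continuous G ∧
      ∀ y, ‖G y‖ ≤ a * T.fiberNorm y ∧ T.fiberNorm (y - T (G y)) ≤ β * T.fiberNorm y := by
  classical
  obtain ⟨C, hC₀, hC⟩ := T.exists_preimage_norm_le hT
  obtain ⟨g, hg⟩ := exists_continuous_approx_section_on_compl_zero hT (continuous_fiberNorm hT)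
    ha (div_pos hβ hC₀)
  set G : F → E := fun y => if hy : y = 0 then 0 else g ⟨y, hy⟩
  have hG (y : F) : ‖G y‖ ≤ a * T.fiberNorm y ∧ ‖T (G y) - y‖ ≤ β / C * T.fiberNorm y := by
    by_cases hy : y = 0
    · subst hy
      simp only [G, dif_pos, map_zero, sub_zero, norm_zero]
      constructor <;> exact mul_nonneg (by positivity) (fiberNorm_nonneg 0)
    · simp only [G, dif_neg hy]
      exact ⟨(hg _).1.le, (hg _).2.le⟩
  refine ⟨G, continuous_of_continuousOn_compl_zero (K := a * C)
    (continuousOn_compl_zero_dite g.continuous) fun y => ?_, fun y => ⟨(hG y).1, ?_⟩⟩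
  · calc ‖G y‖ ≤ a * T.fiberNorm y := (hG y).1
      _ ≤ a * (C * ‖y‖) := by gcongr; exact fiberNorm_le_mul_norm hC y
      _ = a * C * ‖y‖ := by ring
  · calc T.fiberNorm (y - T (G y)) ≤ C * ‖T (G y) - y‖ := by
          rw [← norm_neg, neg_sub]; exact fiberNorm_le_mul_norm hC _
      _ ≤ C * (β / C * T.fiberNorm y) := by gcongr; exact (hG y).2
      _ = β * T.fiberNorm y := by field_simp

end Selection

section Iteration

variable {𝕜 E F : Type*} [NontriviallyNormedField 𝕜]
  [NormedAddCommGroup E] [NormedSpace 𝕜 E] [NormedAddCommGroup F] [NormedSpace 𝕜 F]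
  (T : E →L[𝕜] F) (G : F → E)

def approxResidual (n : ℕ) : F → F := (fun v => v - T (G v))^[n]

theorem approxResidual_succ (n : ℕ) (y : F) :
    T.approxResidual G (n + 1) y = T.approxResidual G n y - T (G (T.approxResidual G n y)) :=
  Function.iterate_succ_apply' _ n y

theorem continuous_approxResidual {G} (hG : Continuous G) (n : ℕ) :
    Continuous (T.approxResidual G n) :=
  (continuous_id.sub (T.continuous.comp hG)).iterate n

theorem sum_range_approxResidual (n : ℕ) (y : F) :
    ∑ k ∈ Finset.range n, T (G (T.approxResidual G k y)) = y - T.approxResidual G n y := by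
  induction n with
  | zero => simp [approxResidual]
  | succ n ih => rw [Finset.sum_range_succ, ih, approxResidual_succ]; abel

variable {T G} {β : ℝ}

theorem fiberNorm_approxResidual_le (hβ : 0 ≤ β)
    (hG : ∀ y, T.fiberNorm (y - T (G y)) ≤ β * T.fiberNorm y) (n : ℕ) (y : F) :
    T.fiberNorm (T.approxResidual G n y) ≤ β ^ n * T.fiberNorm y := by
  induction n with
  | zero => simp [approxResidual]
  | succ n ih =>
    rw [approxResidual_succ, pow_succ', mul_assoc]
    exact (hG _).trans (mul_le_mul_of_nonneg_left ih hβ)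

theorem tendsto_approxResidual (hT : Function.Surjective T) (hβ₀ : 0 ≤ β) (hβ₁ : β < 1)
    (hG : ∀ y, T.fiberNorm (y - T (G y)) ≤ β * T.fiberNorm y) (y : F) :
    Tendsto (fun n => T.approxResidual G n y) atTop (𝓝 0) := by
  refine squeeze_zero_norm (fun n => (norm_le_opNorm_mul_fiberNorm hT _).trans
    (mul_le_mul_of_nonneg_left (fiberNorm_approxResidual_le hβ₀ hG n y) (norm_nonneg T))) ?_
  simpa using ((tendsto_pow_atTop_nhds_zero_of_lt_one hβ₀ hβ₁).mul_const
    (T.fiberNorm y)).const_mul ‖T‖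

theorem exists_section_of_approx [CompleteSpace E] (hT : Function.Surjective T)
    (hq : Continuous T.fiberNorm) (hGc : Continuous G) {a : ℝ} (ha : 0 ≤ a)
    (hβ₀ : 0 ≤ β) (hβ₁ : β < 1) (hGn : ∀ y, ‖G y‖ ≤ a * T.fiberNorm y)
    (hG : ∀ y, T.fiberNorm (y - T (G y)) ≤ β * T.fiberNorm y) :
    ∃ s : F → E, Continuous s ∧ (∀ y, T (s y) = y) ∧
      ∀ y, ‖s y‖ ≤ a / (1 - β) * T.fiberNorm y := by
  have hterm (n : ℕ) (y : F) : ‖G (T.approxResidual G n y)‖ ≤ a * T.fiberNorm y * β ^ n :=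
    calc ‖G (T.approxResidual G n y)‖ ≤ a * T.fiberNorm (T.approxResidual G n y) := hGn _
      _ ≤ a * (β ^ n * T.fiberNorm y) := by gcongr; exact fiberNorm_approxResidual_le hβ₀ hG n y
      _ = a * T.fiberNorm y * β ^ n := by ring
  have hgeom (c : ℝ) : HasSum (fun n => c * β ^ n) (c * (1 - β)⁻¹) :=
    (hasSum_geometric_of_lt_one hβ₀ hβ₁).mul_left c
  have hsum (y : F) : HasSum (fun n => G (T.approxResidual G n y))
      (∑' n, G (T.approxResidual G n y)) :=
    (Summable.of_norm_bounded (hgeom _).summable (hterm · y)).hasSum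
  refine ⟨fun y => ∑' n, G (T.approxResidual G n y), ?_, fun y => ?_, fun y => ?_⟩
  · refine continuous_iff_continuousAt.2 fun y₀ => ?_
    refine (continuousOn_tsum (fun n => (hGc.comp (continuous_approxResidual T hGc n)).continuousOn)
      (hgeom (a * (T.fiberNorm y₀ + 1))).summable fun n y hy => (hterm n y).trans ?_).continuousAt
      (hq.continuousAt.eventually_lt continuousAt_const (lt_add_one _))
    gcongr
    exact le_of_lt hy
  · refine tendsto_nhds_unique ((hsum y).mapL T).tendsto_sum_nat ?_
    simp_rw [sum_range_approxResidual]
    simpa using tendsto_const_nhds.sub (tendsto_approxResidual hT hβ₀ hβ₁ hG y)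
  · exact (tsum_of_norm_bounded (hgeom _) (hterm · y)).trans_eq (by ring)

end Iteration

end ContinuousLinearMap

/-- Michael, Continuous Selections I, Prop. 7.2: a continuous section with
pointwise norm within a factor (1+ε) of the minimal possible. -/
theorem bartle_graves_almost_minimal
    {E F : Type*} [NormedAddCommGroup E] [NormedSpace ℝ E] [CompleteSpace E]
    [NormedAddCommGroup F] [NormedSpace ℝ F] [CompleteSpace F]
    (T : E →L[ℝ] F) (hT : Function.Surjective T) {ε : ℝ} (hε : 0 < ε) :
    ∃ s : F → E, Continuous s ∧ (∀ y, T (s y) = y) ∧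
      ∀ y, ‖s y‖ ≤ (1 + ε) * sInf (Norm.norm '' (T ⁻¹' {y})) := by
  set β := ε / (2 * (1 + ε)) with hβ
  have hβ₀ : 0 < β := by positivity
  have hβ₁ : β < 1 := by rw [div_lt_one (by positivity)]; linarith
  obtain ⟨G, hGc, hG⟩ := T.exists_approx_section hT (a := 1 + ε / 2) (by linarith) hβ₀
  obtain ⟨s, hs, hTs, hsn⟩ := T.exists_section_of_approx hT (T.continuous_fiberNorm hT) hGc
    (by positivity) hβ₀.le hβ₁ (fun y => (hG y).1) fun y => (hG y).2
  have hfactor : (1 + ε / 2) / (1 - β) = 1 + ε := by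
    rw [div_eq_iff (by linarith), hβ]
    field_simp
    ring
  exact ⟨s, hs, hTs, fun y => hfactor ▸ hsn y⟩
end

section
/- Let X be a metric space, Y a Banach space, and φ : X → Set Y a lower semicontinuous map with nonempty closed convex values admitting a continuous selection f₀. Then for every x ∈ X and every y ∈ φ(x) and every ε > 0, there exists a continuous selection f of φ with ‖f(x) − y‖ < ε. -/
/-!
Redefining `φ x` to be `{y}` keeps `φ` lower hemicontinuous with nonempty closed convex values,
so Michael's selection theorem gives a continuous selection passing exactly through `y`.

Michael's theorem: thickenings of convex sets are convex, so a partition of unity glues locally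
constant choices into a continuous `ε`-approximate selection. Doing this for the sets
`thickening ε (φ z) ∩ ball (g z) δ` refines a `δ`-approximate selection `g` into an
`ε`-approximate one within `δ` of `g`. With `δ = 2⁻ⁿ`, `ε = 2⁻⁽ⁿ⁺¹⁾` the approximations form a
uniformly Cauchy sequence, whose limit is continuous and lies in the closed values of `φ`.
-/

open Set Metric Filter Topology Function

theorem exists_seq_of_forall_exists_succ {α : Type*} {P : ℕ → α → Prop}
    {R : ℕ → α → α → Prop} (h₀ : ∃ a, P 0 a) (h : ∀ n a, P n a → ∃ b, P (n + 1) b ∧ R n a b) :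
    ∃ u : ℕ → α, ∀ n, P n (u n) ∧ R n (u n) (u (n + 1)) := by
  obtain ⟨a₀, ha₀⟩ := h₀
  have : Nonempty α := ⟨a₀⟩
  choose! next hnext using h
  let u : ℕ → α := fun n => Nat.rec a₀ next n
  have hu : ∀ n, P n (u n) := fun n => by
    induction n with
    | zero => exact ha₀
    | succ n ih => exact (hnext n _ ih).1
  exact ⟨u, fun n => ⟨hu n, (hnext n _ (hu n)).2⟩⟩

theorem exists_tendstoUniformly_of_dist_le_geometric_two {X Y : Type*} [PseudoMetricSpace Y]
    [CompleteSpace Y] {u : ℕ → X → Y} {C : ℝ}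
    (hu : ∀ n z, dist (u n z) (u (n + 1) z) ≤ C / 2 / 2 ^ n) :
    ∃ f : X → Y, TendstoUniformly u f atTop := by
  choose f hf using fun z => cauchySeq_tendsto_of_complete (cauchySeq_of_le_geometric_two (hu · z))
  refine ⟨f, Metric.tendstoUniformly_iff.2 fun ε hε => ?_⟩
  have hC : Tendsto (fun n : ℕ => C / 2 ^ n) atTop (𝓝 0) := by
    simpa using tendsto_const_nhds.div_atTop (tendsto_pow_atTop_atTop_of_one_lt one_lt_two)
  filter_upwards [hC.eventually (gt_mem_nhds hε)] with n hn z
  rw [dist_comm]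
  exact (dist_le_of_le_geometric_two_of_tendsto (hu · z) (hf z) n).trans_lt hn

theorem mem_closure_of_tendsto_of_mem_thickening_s8 {Y : Type*} [PseudoMetricSpace Y] {s : Set Y}
    {u : ℕ → Y} {a : Y} {δ : ℕ → ℝ} (hu : Tendsto u atTop (𝓝 a)) (hδ : Tendsto δ atTop (𝓝 0))
    (h : ∀ n, u n ∈ thickening (δ n) s) : a ∈ closure s := by
  refine Metric.mem_closure_iff.2 fun ε hε => ?_
  obtain ⟨n, hna, hnδ⟩ :=
    ((tendsto_iff_dist_tendsto_zero.1 hu).eventually (gt_mem_nhds (half_pos hε))).and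
      (hδ.eventually (gt_mem_nhds (half_pos hε))) |>.exists
  obtain ⟨w, hw, hnw⟩ := mem_thickening_iff.1 (h n)
  refine ⟨w, hw, ?_⟩
  calc dist a w ≤ dist (u n) a + dist (u n) w := dist_triangle_left _ _ _
    _ < ε / 2 + ε / 2 := add_lt_add hna (hnw.trans hnδ)
    _ = ε := add_halves ε

namespace LowerHemicontinuous

variable {X Y : Type*} [TopologicalSpace X] {φ : X → Set Y}

theorem eventually_mem_thickening [PseudoMetricSpace Y] (hφ : LowerHemicontinuous φ) {x : X}
    {y : Y} (hy : y ∈ φ x) {ε : ℝ} (hε : 0 < ε) : ∀ᶠ z in 𝓝 x, y ∈ thickening ε (φ z) := by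
  filter_upwards [lowerHemicontinuousAt_iff.1 (hφ x) _ isOpen_ball ⟨y, hy, mem_ball_self hε⟩]
    with z ⟨w, hw, hwy⟩
  exact mem_thickening_iff.2 ⟨w, hw, mem_ball'.1 hwy⟩

theorem update [TopologicalSpace Y] [T1Space X] [DecidableEq X] (hφ : LowerHemicontinuous φ)
    {x : X} {y : Y} (hy : y ∈ φ x) : LowerHemicontinuous (update φ x {y}) := by
  rw [lowerHemicontinuous_iff_isOpen_inter_nonempty] at hφ ⊢
  intro U hU
  by_cases hyU : y ∈ U
  · convert hφ U hU using 1
    ext z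
    rcases eq_or_ne z x with rfl | hz
    · simpa using iff_of_true hyU ⟨y, hy, hyU⟩
    · simp [hz]
  · convert (hφ U hU).inter (isOpen_compl_singleton (x := x)) using 1
    ext z
    rcases eq_or_ne z x with rfl | hz
    · simp [hyU]
    · simp [hz]

end LowerHemicontinuous

section Selection

variable {X Y : Type*} [TopologicalSpace X] [NormalSpace X] [ParacompactSpace X]
  [SeminormedAddCommGroup Y] [NormedSpace ℝ Y] {φ : X → Set Y}

theorem exists_continuous_forall_mem_thickening (hφ : LowerHemicontinuous φ)
    (hne : ∀ x, (φ x).Nonempty) (hcv : ∀ x, Convex ℝ (φ x)) {ε : ℝ} (hε : 0 < ε) :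
    ∃ g : C(X, Y), ∀ x, g x ∈ thickening ε (φ x) :=
  exists_continuous_forall_mem_convex_of_local_const (fun x => (hcv x).thickening ε) fun x =>
    ⟨(hne x).some, hφ.eventually_mem_thickening (hne x).some_mem hε⟩

theorem exists_continuous_forall_mem_thickening_dist_lt (hφ : LowerHemicontinuous φ)
    (hcv : ∀ x, Convex ℝ (φ x)) {g : X → Y} (hg : Continuous g) {δ ε : ℝ}
    (hgφ : ∀ x, g x ∈ thickening δ (φ x)) (hε : 0 < ε) :
    ∃ g' : C(X, Y), ∀ x, g' x ∈ thickening ε (φ x) ∧ dist (g x) (g' x) < δ := by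
  obtain ⟨g', hg'⟩ := exists_continuous_forall_mem_convex_of_local_const
    (t := fun x => thickening ε (φ x) ∩ ball (g x) δ)
    (fun x => ((hcv x).thickening ε).inter (convex_ball _ _)) fun x => by
      obtain ⟨c, hc, hgc⟩ := mem_thickening_iff.1 (hgφ x)
      refine ⟨c, (hφ.eventually_mem_thickening hc hε).and ?_⟩
      filter_upwards [hg.continuousAt.eventually (isOpen_ball.mem_nhds hgc)] with z hz
      exact mem_ball_comm.1 hz
  exact ⟨g', fun x => ⟨(hg' x).1, mem_ball'.1 (hg' x).2⟩⟩

theorem exists_continuous_selection [CompleteSpace Y] (hφ : LowerHemicontinuous φ)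
    (hne : ∀ x, (φ x).Nonempty) (hcl : ∀ x, IsClosed (φ x)) (hcv : ∀ x, Convex ℝ (φ x)) :
    ∃ f : X → Y, Continuous f ∧ ∀ x, f x ∈ φ x := by
  obtain ⟨g, hg⟩ := exists_seq_of_forall_exists_succ
    (P := fun n (g : C(X, Y)) => ∀ x, g x ∈ thickening (1 / 2 ^ n) (φ x))
    (R := fun n g g' => ∀ x, dist (g x) (g' x) < 1 / 2 ^ n)
    (exists_continuous_forall_mem_thickening hφ hne hcv (by positivity)) fun n g hg =>
      (exists_continuous_forall_mem_thickening_dist_lt hφ hcv g.continuous hg (by positivity)).imp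
        fun _ => forall_and.1
  obtain ⟨f, hf⟩ := exists_tendstoUniformly_of_dist_le_geometric_two (u := fun n => ⇑(g n))
    (C := 2) fun n x => by simpa using ((hg n).2 x).le
  refine ⟨f, hf.continuous (.of_forall fun n => (g n).continuous), fun x => ?_⟩
  rw [← (hcl x).closure_eq]
  exact mem_closure_of_tendsto_of_mem_thickening_s8 (hf.tendsto_at x)
    (tendsto_const_nhds.div_atTop (tendsto_pow_atTop_atTop_of_one_lt one_lt_two))
    fun n => (hg n).1 x

theorem exists_continuous_selection_eq [T1Space X] [T1Space Y] [CompleteSpace Y]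
    (hφ : LowerHemicontinuous φ) (hne : ∀ x, (φ x).Nonempty) (hcl : ∀ x, IsClosed (φ x))
    (hcv : ∀ x, Convex ℝ (φ x)) {x : X} {y : Y} (hy : y ∈ φ x) :
    ∃ f : X → Y, Continuous f ∧ (∀ z, f z ∈ φ z) ∧ f x = y := by
  classical
  have hupdate {P : Set Y → Prop} (hP : P {y}) (hPφ : ∀ z, P (φ z)) :
      ∀ z, P (update φ x {y} z) :=
    (forall_update_iff φ fun _ => P).2 ⟨hP, fun z _ => hPφ z⟩
  obtain ⟨f, hf, hfφ⟩ := exists_continuous_selection (hφ.update hy)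
    (hupdate (singleton_nonempty y) hne) (hupdate isClosed_singleton hcl)
    (hupdate (convex_singleton y) hcv)
  have hfx : f x = y := by simpa using hfφ x
  refine ⟨f, hf, fun z => ?_, hfx⟩
  rcases eq_or_ne z x with rfl | hz
  · exact hfx ▸ hy
  · simpa [hz] using hfφ z

end Selection

theorem dense_family_of_selections_general
    {X : Type*} [MetricSpace X]
    {Y : Type*} [NormedAddCommGroup Y] [NormedSpace ℝ Y] [CompleteSpace Y]
    (φ : X → Set Y)
    (hlsc : ∀ U : Set Y, IsOpen U → IsOpen {x | (φ x ∩ U).Nonempty})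
    (hne : ∀ x, (φ x).Nonempty)
    (hcl : ∀ x, IsClosed (φ x))
    (hcv : ∀ x, Convex ℝ (φ x)) :
    ∀ x : X, ∀ y ∈ φ x, ∀ ε : ℝ, 0 < ε →
      ∃ f : X → Y, Continuous f ∧ (∀ z, f z ∈ φ z) ∧ ‖f x - y‖ < ε := by
  intro x y hy ε hε
  obtain ⟨f, hf, hfφ, hfx⟩ := exists_continuous_selection_eq
    (lowerHemicontinuous_iff_isOpen_inter_nonempty.2 hlsc) hne hcl hcv hy
  exact ⟨f, hf, hfφ, by simpa [hfx] using hε⟩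

/-- Pointwise density of continuous selections in the values of an LSC
convex-valued map on a metric domain. -/
theorem dense_family_of_selections
    {X : Type*} [MetricSpace X]
    {Y : Type*} [NormedAddCommGroup Y] [NormedSpace ℝ Y] [CompleteSpace Y]
    (φ : X → Set Y)
    (hlsc : ∀ U : Set Y, IsOpen U → IsOpen {x | (φ x ∩ U).Nonempty})
    (hne : ∀ x, (φ x).Nonempty)
    (hcl : ∀ x, IsClosed (φ x))
    (hcv : ∀ x, Convex ℝ (φ x))
    (f₀ : X → Y) (hf₀ : Continuous f₀) (hf₀sel : ∀ x, f₀ x ∈ φ x) :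
    ∀ x : X, ∀ y ∈ φ x, ∀ ε : ℝ, 0 < ε →
      ∃ f : X → Y, Continuous f ∧ (∀ z, f z ∈ φ z) ∧ ‖f x - y‖ < ε :=
  dense_family_of_selections_general φ hlsc hne hcl hcv
end

section
/- There is no continuous map f from the space of nonempty compact subsets of the circle S¹ (with the Hausdorff metric) to S¹ such that f(A) ∈ A for all A. -/
open TopologicalSpace Metric

noncomputable def negOneC : Circle := ⟨-1, by simp [Submonoid.unitSphere, mem_sphere_zero_iff_norm]⟩

lemma negOneC_coe : ((negOneC : Circle) : ℂ) = -1 := rfl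

lemma negOneC_sq : negOneC * negOneC = 1 := by
  ext; simp [negOneC_coe]

lemma negOneC_inv : negOneC⁻¹ = negOneC := by
  rw [inv_eq_iff_mul_eq_one, negOneC_sq]

noncomputable def pairC (z : Circle) : NonemptyCompacts Circle :=
  ⟨⟨{z, negOneC * z}, ((Set.finite_singleton _).insert _).isCompact⟩,
    ⟨z, Set.mem_insert _ _⟩⟩

lemma pairC_coe (z : Circle) : (pairC z : Set Circle) = {z, negOneC * z} := rfl

lemma dist_mul_left' (a z w : Circle) : dist (a * z) (a * w) = dist z w := by
  show dist ((a*z : Circle) : ℂ) ((a*w : Circle):ℂ) = dist (z:ℂ) (w:ℂ)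
  push_cast
  simp [Complex.dist_eq, ← mul_sub, map_mul, Circle.norm_coe]

lemma pairC_aux (z w : Circle) :
    ∀ x ∈ ({z, negOneC * z} : Set Circle), ∃ y ∈ ({w, negOneC * w} : Set Circle),
      dist x y ≤ dist z w := by
  rintro x (rfl | rfl)
  · exact ⟨w, Set.mem_insert _ _, le_rfl⟩
  · exact ⟨negOneC * w, Set.mem_insert_of_mem _ rfl, (dist_mul_left' _ _ _).le⟩

lemma pairC_lipschitz : LipschitzWith 1 pairC := by
  apply LipschitzWith.of_dist_le_mul
  intro z w
  rw [NNReal.coe_one, one_mul, NonemptyCompacts.dist_eq, pairC_coe, pairC_coe]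
  apply hausdorffDist_le_of_mem_dist dist_nonneg (pairC_aux z w)
  rw [dist_comm]
  exact pairC_aux w z

lemma pairC_neg (z : Circle) : pairC (negOneC * z) = pairC z := by
  apply NonemptyCompacts.ext
  rw [pairC_coe, pairC_coe, ← mul_assoc, negOneC_sq, one_mul, Set.pair_comm]

/-- There is no continuous selector on the hyperspace of nonempty compact
subsets of the circle with the Hausdorff metric. -/
theorem no_continuous_selector_circle :
    ¬ ∃ f : NonemptyCompacts Circle → Circle,
        Continuous f ∧ ∀ A : NonemptyCompacts Circle, f A ∈ (A : Set Circle) := by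
  rintro ⟨f, hf, hsel⟩
  set q : Circle → Circle := fun z => f (pairC z) * z⁻¹ with hq
  have hqc : Continuous q :=
    (hf.comp pairC_lipschitz.continuous).mul (continuous_inv.comp continuous_id)
  have hqmem : ∀ z, q z = 1 ∨ q z = negOneC := by
    intro z
    have h := hsel (pairC z)
    rw [pairC_coe, Set.mem_insert_iff, Set.mem_singleton_iff] at h
    rcases h with h | h
    · left; show f (pairC z) * z⁻¹ = 1
      rw [h, mul_inv_cancel]
    · right; show f (pairC z) * z⁻¹ = negOneC
      rw [h, mul_assoc, mul_inv_cancel, mul_one]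
  have hqneg : ∀ z, q (negOneC * z) = q z * negOneC := by
    intro z
    show f (pairC (negOneC * z)) * (negOneC * z)⁻¹ = f (pairC z) * z⁻¹ * negOneC
    rw [pairC_neg, mul_inv_rev, negOneC_inv, mul_assoc]
  set r : Circle → ℝ := fun z => ((q z : ℂ)).re with hr
  have hrc : Continuous r := Complex.continuous_re.comp (continuous_subtype_val.comp hqc)
  have hrval : ∀ z, r z = 1 ∨ r z = -1 := by
    intro z
    rcases hqmem z with h | h <;> simp [hr, h, negOneC_coe]
  have hsurj : Function.Surjective Circle.exp := fun z => ⟨Complex.arg z, Circle.exp_arg z⟩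
  have hpre : IsPreconnected (Set.range r) := by
    rw [← hsurj.range_comp r]
    exact isPreconnected_range (hrc.comp Circle.exp.continuous)
  have hconst : ∀ z w : Circle, r z = r w := by
    intro z w
    by_contra hne
    have h01 : (0:ℝ) ∈ Set.range r := by
      have hoc : (Set.range r).OrdConnected := hpre.ordConnected
      rcases hrval z with hz | hz <;> rcases hrval w with hw | hw
      · exact absurd (hz.trans hw.symm) hne
      · exact hoc.out ⟨w, hw⟩ ⟨z, hz⟩ ⟨by norm_num, by norm_num⟩
      · exact hoc.out ⟨z, hz⟩ ⟨w, hw⟩ ⟨by norm_num, by norm_num⟩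
      · exact absurd (hz.trans hw.symm) hne
    rcases h01 with ⟨c, hc⟩
    rcases hrval c with h | h <;> rw [hc] at h <;> norm_num at h
  have hqconst : ∀ z w : Circle, q z = q w := by
    intro z w
    rcases hqmem z with hz | hz <;> rcases hqmem w with hw | hw <;> rw [hz, hw]
    · have h2 : (1:ℝ) = -1 := by
        simpa [hr, hz, hw, negOneC_coe] using hconst z w
      norm_num at h2
    · have h2 : (1:ℝ) = -1 := by
        simpa [hr, hz, hw, negOneC_coe] using hconst w z
      norm_num at h2
  have h1 : q (negOneC * 1) = q 1 := hqconst _ _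
  rw [hqneg 1] at h1
  have h2 : negOneC = 1 := mul_left_cancel (h1.trans (mul_one (q 1)).symm)
  have h3 : (-1 : ℂ) = 1 := congrArg Subtype.val h2
  norm_num at h3
end
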